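/- arXiv:2504.21613 — 7 statements merged into one kernel-verified Lean document; each statement's English description precedes it below -/
import Mathlib

section
/- The control reproduction number is the spectral radius of the next-generation matrix: with Z the 3×3 matrix whose first row is (0, β·N1/N0, β·η·N1/N0) and whose other entries are zero, and W = [[k3,0,0],[−pγ,k4,0],[−qγ,−a2σ,k5]], the set of complex eigenvalues of Z·W⁻¹ is {0, R_c}, where R_c = N1·β·η·γ·(a2·p·σ + k4·q)/(N0·k3·k4·k5) + N1·β·p·γ/(N0·k3·k4); hence the spectral radius of Z·W⁻¹ equals R_c. -/
/-!
Only the first row of `Z` is nonzero, hence the same holds for `Z * W⁻¹`, which is therefore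
upper triangular with diagonal `(R_c, 0, 0)`; the eigenvalues of a triangular matrix are its
diagonal entries. The entry `R_c` is read off from the explicit inverse of the lower triangular
matrix `W`, and it is nonnegative because the disease-free populations `S0`, `V0` are, so the
spectral radius `max ‖0‖ ‖R_c‖` is `R_c`.
-/

open Matrix Polynomial

namespace Matrix

variable {K : Type*} [Field K]

theorem spectrum_eq_range_diag_of_isUpperTriangular {n : Type*} [Fintype n] [DecidableEq n]
    [LinearOrder n] {A : Matrix n n K} (h : A.IsUpperTriangular) :
    spectrum K A = Set.range A.diag := by
  ext r
  rw [mem_spectrum_iff_isRoot_charpoly, charpoly_of_isUpperTriangular A h]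
  simp only [IsRoot.def, eval_prod, eval_sub, eval_X, eval_C, Finset.prod_eq_zero_iff,
    Finset.mem_univ, true_and, sub_eq_zero, Set.mem_range, diag_apply]
  exact exists_congr fun _ => eq_comm

theorem spectrum_eq_pair_of_forall_row_eq_zero {n : ℕ} {A : Matrix (Fin (n + 2)) (Fin (n + 2)) K}
    (h : ∀ i, i ≠ 0 → A i = 0) : spectrum K A = {0, A 0 0} := by
  have hA : ∀ i j, i ≠ 0 → A i j = 0 := fun i j hi => congrFun (h i hi) j
  rw [spectrum_eq_range_diag_of_isUpperTriangular
    fun i j hji => hA i j (Fin.pos_iff_ne_zero.mp ((Fin.zero_le j).trans_lt hji))]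
  ext x
  simp only [Set.mem_range, diag_apply, Set.mem_insert_iff, Set.mem_singleton_iff]
  constructor
  · rintro ⟨i, rfl⟩
    by_cases hi : i = 0
    · exact Or.inr (by rw [hi])
    · exact Or.inl (hA i i hi)
  · rintro (rfl | rfl)
    · exact ⟨1, hA 1 1 one_ne_zero⟩
    · exact ⟨0, rfl⟩

theorem inv_lowerTriangular_fin_three {a b c d e f : K} (ha : a ≠ 0) (hc : c ≠ 0) (hf : f ≠ 0) :
    (!![a, 0, 0; b, c, 0; d, e, f])⁻¹ =
      !![a⁻¹, 0, 0; -b / (a * c), c⁻¹, 0; (b * e - c * d) / (a * c * f), -e / (c * f), f⁻¹] := by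
  refine inv_eq_right_inv ?_
  rw [mul_fin_three, one_fin_three]
  ext i j
  fin_cases i <;> fin_cases j <;> simp <;> field_simp <;> ring

end Matrix

theorem spectralRadius_eq_of_spectrum_eq_pair {𝕜 A : Type*} [NormedField 𝕜] [Ring A]
    [Algebra 𝕜 A] {a : A} {z : 𝕜} (h : spectrum 𝕜 a = {0, z}) :
    spectralRadius 𝕜 a = ‖z‖₊ := by
  rw [spectralRadius, h, iSup_pair]
  simp

theorem control_reproduction_number_spectral_radius_general
    (Λ μ β η γ σ θ δ c1 c2 r1 r2 p q a2 φ1 : ℝ)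
    (hΛ : 0 < Λ) (hμ : 0 < μ) (hβ : 0 < β) (hη : 0 < η) (hγ : 0 < γ)
    (hσ : 0 < σ) (hθ : 0 < θ) (hδ : 0 < δ) (hc1 : 0 < c1) (hc2 : 0 < c2)
    (hr1 : 0 < r1) (hr2 : 0 < r2)
    (hp : 0 < p) (hq : 0 < q)
    (ha2 : 0 < a2)
    (hφ1 : 0 ≤ φ1)
    (k1 k2 k3 k4 k5 k6 S0 V0 N0 N1 Rc : ℝ)
    (hk1 : k1 = c1 + μ) (hk2 : k2 = c2 + μ) (hk3 : k3 = μ + γ)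
    (hk4 : k4 = μ + σ) (hk5 : k5 = μ + δ + θ) (hk6 : k6 = k1 * k2 - c1 * c2)
    (hS0 : S0 = (c2 * r2 + r1 * k2) * Λ / k6)
    (hV0 : V0 = (k1 * r2 + c1 * r1) * Λ / k6)
    (hN0 : N0 = S0 + V0) (hN1 : N1 = S0 + φ1 * V0)
    (hRc : Rc = N1 * β * η * γ * (a2 * p * σ + k4 * q) / (N0 * k3 * k4 * k5)
        + N1 * β * p * γ / (N0 * k3 * k4))
    (Z W : Matrix (Fin 3) (Fin 3) ℝ)
    (hZ : Z = !![0, β * N1 / N0, β * η * N1 / N0; 0, 0, 0; 0, 0, 0])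
    (hW : W = !![k3, 0, 0; -(p * γ), k4, 0; -(q * γ), -(a2 * σ), k5]) :
    spectrum ℂ ((Z * W⁻¹).map (Complex.ofReal)) = {0, (Rc : ℂ)} ∧
    spectralRadius ℂ ((Z * W⁻¹).map (Complex.ofReal)) = ENNReal.ofReal Rc := by
  have hk3_pos : 0 < k3 := hk3 ▸ by positivity
  have hk4_pos : 0 < k4 := hk4 ▸ by positivity
  have hk5_pos : 0 < k5 := hk5 ▸ by positivity
  have hk6_eq : k6 = μ * (c1 + c2 + μ) := by rw [hk6, hk1, hk2]; ring
  have hk6_pos : 0 < k6 := hk6_eq ▸ by positivity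
  have hS0_nonneg : 0 ≤ S0 := hS0 ▸ by rw [hk2]; positivity
  have hV0_nonneg : 0 ≤ V0 := hV0 ▸ by rw [hk1]; positivity
  have hN0_nonneg : 0 ≤ N0 := hN0 ▸ by positivity
  have hN1_nonneg : 0 ≤ N1 := hN1 ▸ by positivity
  have hRc_nonneg : 0 ≤ Rc := hRc ▸ by positivity
  have hRc_entry : (Z * W⁻¹) 0 0 = Rc := by
    rw [hRc, hZ, hW, inv_lowerTriangular_fin_three hk3_pos.ne' hk4_pos.ne' hk5_pos.ne']
    simp [mul_apply, Fin.sum_univ_three]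
    field_simp
    ring
  have hrows : ∀ i, i ≠ 0 → (Z * W⁻¹).map Complex.ofReal i = 0 := by
    intro i hi
    ext j
    rw [map_apply]
    fin_cases i <;> simp [hZ, mul_apply, Fin.sum_univ_three] at hi ⊢
  have hspec := spectrum_eq_pair_of_forall_row_eq_zero hrows
  rw [map_apply, hRc_entry] at hspec
  refine ⟨hspec, ?_⟩
  rw [spectralRadius_eq_of_spectrum_eq_pair hspec, Complex.nnnorm_real, ← enorm_eq_nnnorm,
    Real.enorm_eq_ofReal hRc_nonneg]

/-- The control reproduction number is the spectral radius of the next-generation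
matrix: the set of complex eigenvalues of `Z * W⁻¹` is `{0, R_c}`, hence its
spectral radius equals `R_c`. -/
theorem control_reproduction_number_spectral_radius
    (Λ μ β η γ σ θ δ c1 c2 r1 r2 p q a1 a2 φ1 φ2 : ℝ)
    (hΛ : 0 < Λ) (hμ : 0 < μ) (hβ : 0 < β) (hη : 0 < η) (hγ : 0 < γ)
    (hσ : 0 < σ) (hθ : 0 < θ) (hδ : 0 < δ) (hc1 : 0 < c1) (hc2 : 0 < c2)
    (hr1 : 0 < r1) (hr1' : r1 < 1) (hr2 : 0 < r2) (hr2' : r2 < 1)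
    (hp : 0 < p) (hp' : p < 1) (hq : 0 < q) (hq' : q < 1)
    (ha1 : 0 < a1) (ha1' : a1 < 1) (ha2 : 0 < a2) (ha2' : a2 < 1)
    (hr12 : r1 + r2 = 1) (hpq : p + q = 1) (ha12 : a1 + a2 = 1)
    (hφ1 : 0 ≤ φ1) (hφ1' : φ1 ≤ 1) (hφ2 : 0 ≤ φ2) (hφ2' : φ2 ≤ 1)
    (k1 k2 k3 k4 k5 k6 S0 V0 N0 N1 Rc : ℝ)
    (hk1 : k1 = c1 + μ) (hk2 : k2 = c2 + μ) (hk3 : k3 = μ + γ)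
    (hk4 : k4 = μ + σ) (hk5 : k5 = μ + δ + θ) (hk6 : k6 = k1 * k2 - c1 * c2)
    (hS0 : S0 = (c2 * r2 + r1 * k2) * Λ / k6)
    (hV0 : V0 = (k1 * r2 + c1 * r1) * Λ / k6)
    (hN0 : N0 = S0 + V0) (hN1 : N1 = S0 + φ1 * V0)
    (hRc : Rc = N1 * β * η * γ * (a2 * p * σ + k4 * q) / (N0 * k3 * k4 * k5)
        + N1 * β * p * γ / (N0 * k3 * k4))
    (Z W : Matrix (Fin 3) (Fin 3) ℝ)
    (hZ : Z = !![0, β * N1 / N0, β * η * N1 / N0; 0, 0, 0; 0, 0, 0])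
    (hW : W = !![k3, 0, 0; -(p * γ), k4, 0; -(q * γ), -(a2 * σ), k5]) :
    spectrum ℂ ((Z * W⁻¹).map (Complex.ofReal)) = {0, (Rc : ℂ)} ∧
    spectralRadius ℂ ((Z * W⁻¹).map (Complex.ofReal)) = ENNReal.ofReal Rc :=
  control_reproduction_number_spectral_radius_general Λ μ β η γ σ θ δ c1 c2 r1 r2 p q a2 φ1 hΛ hμ hβ
    hη hγ hσ hθ hδ hc1 hc2 hr1 hr2 hp hq ha2 hφ1 k1 k2 k3 k4 k5 k6 S0 V0 N0 N1 Rc hk1 hk2 hk3 hk4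
    hk5 hk6 hS0 hV0 hN0 hN1 hRc Z W hZ hW
end

section
/- There exists a nonzero row vector w ∈ ℝ³ with all components nonnegative such that wᵀ·(W⁻¹·Z) = R_c·wᵀ, i.e. w is a nonnegative left eigenvector of the matrix W⁻¹·Z associated with the eigenvalue R_c. -/
/-!
`Z` has rank one: `Z = u wᵀ` with `u = (β N₁ / N₀, 0, 0)` and `w = (0, 1, η)`. Hence
`W⁻¹ Z = (W⁻¹ u) wᵀ`, and `w` is a left eigenvector of it with eigenvalue `w ⬝ W⁻¹ u`.
Since `W` is lower triangular its inverse is explicit, and `w ⬝ W⁻¹ u` is exactly `R_c`.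
-/

open Matrix

theorem Matrix.inv_lowerTriangular_fin_three_s6 {K : Type*} [Field K] {a b c : K}
    (ha : a ≠ 0) (hb : b ≠ 0) (hc : c ≠ 0) (d e f : K) :
    (!![a, 0, 0; d, b, 0; e, f, c])⁻¹ =
      !![a⁻¹, 0, 0; -d / (a * b), b⁻¹, 0; (d * f - b * e) / (a * b * c), -f / (b * c), c⁻¹] := by
  refine inv_eq_right_inv ?_
  ext i j
  fin_cases i <;> fin_cases j <;> simp [mul_apply, Fin.sum_univ_three] <;> field_simp <;> ring

theorem exists_nonneg_left_eigenvector_general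
    (μ β η γ σ θ δ p q a2 : ℝ)
    (hμ : 0 < μ) (hη : 0 < η) (hγ : 0 < γ)
    (hσ : 0 < σ) (hθ : 0 < θ) (hδ : 0 < δ)
    (k3 k4 k5 N0 N1 Rc : ℝ)
    (hk3 : k3 = μ + γ)
    (hk4 : k4 = μ + σ) (hk5 : k5 = μ + δ + θ)
    (hRc : Rc = N1 * β * η * γ * (a2 * p * σ + k4 * q) / (N0 * k3 * k4 * k5)
        + N1 * β * p * γ / (N0 * k3 * k4))
    (Z W : Matrix (Fin 3) (Fin 3) ℝ)
    (hZ : Z = !![0, β * N1 / N0, β * η * N1 / N0; 0, 0, 0; 0, 0, 0])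
    (hW : W = !![k3, 0, 0; -(p * γ), k4, 0; -(q * γ), -(a2 * σ), k5]) :
    ∃ w : Fin 3 → ℝ, w ≠ 0 ∧ (∀ i, 0 ≤ w i) ∧ w ᵥ* (W⁻¹ * Z) = Rc • w := by
  have hk3_ne : k3 ≠ 0 := by rw [hk3]; positivity
  have hk4_ne : k4 ≠ 0 := by rw [hk4]; positivity
  have hk5_ne : k5 ≠ 0 := by rw [hk5]; positivity
  have hZ_rank_one : Z = vecMulVec ![β * N1 / N0, 0, 0] ![0, 1, η] := by
    rw [hZ]
    ext i j
    fin_cases i <;> fin_cases j <;> simp [vecMulVec_apply, div_mul_eq_mul_div, mul_right_comm _ η]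
  refine ⟨![0, 1, η], fun h ↦ by simpa using congrFun h 1, ?_, ?_⟩
  · intro i
    fin_cases i <;> simp [hη.le]
  · rw [hZ_rank_one, mul_vecMulVec, vecMul_vecMulVec, hW,
      inv_lowerTriangular_fin_three_s6 hk3_ne hk4_ne hk5_ne, hRc]
    congr 1
    simp only [dotProduct, mulVec, Fin.sum_univ_three, of_apply, cons_val', cons_val_fin_one,
      cons_val_zero, cons_val_one, cons_val]
    ring

/-- There exists a nonzero nonnegative row vector `w` with
`wᵀ (W⁻¹ Z) = R_c wᵀ`, i.e. a nonnegative left eigenvector of `W⁻¹ Z`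
associated with the eigenvalue `R_c`. -/
theorem exists_nonneg_left_eigenvector
    (Λ μ β η γ σ θ δ c1 c2 r1 r2 p q a1 a2 φ1 φ2 : ℝ)
    (hΛ : 0 < Λ) (hμ : 0 < μ) (hβ : 0 < β) (hη : 0 < η) (hγ : 0 < γ)
    (hσ : 0 < σ) (hθ : 0 < θ) (hδ : 0 < δ) (hc1 : 0 < c1) (hc2 : 0 < c2)
    (hr1 : 0 < r1) (hr1' : r1 < 1) (hr2 : 0 < r2) (hr2' : r2 < 1)
    (hp : 0 < p) (hp' : p < 1) (hq : 0 < q) (hq' : q < 1)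
    (ha1 : 0 < a1) (ha1' : a1 < 1) (ha2 : 0 < a2) (ha2' : a2 < 1)
    (hr12 : r1 + r2 = 1) (hpq : p + q = 1) (ha12 : a1 + a2 = 1)
    (hφ1 : 0 ≤ φ1) (hφ1' : φ1 ≤ 1) (hφ2 : 0 ≤ φ2) (hφ2' : φ2 ≤ 1)
    (k1 k2 k3 k4 k5 k6 S0 V0 N0 N1 Rc : ℝ)
    (hk1 : k1 = c1 + μ) (hk2 : k2 = c2 + μ) (hk3 : k3 = μ + γ)
    (hk4 : k4 = μ + σ) (hk5 : k5 = μ + δ + θ) (hk6 : k6 = k1 * k2 - c1 * c2)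
    (hS0 : S0 = (c2 * r2 + r1 * k2) * Λ / k6)
    (hV0 : V0 = (k1 * r2 + c1 * r1) * Λ / k6)
    (hN0 : N0 = S0 + V0) (hN1 : N1 = S0 + φ1 * V0)
    (hRc : Rc = N1 * β * η * γ * (a2 * p * σ + k4 * q) / (N0 * k3 * k4 * k5)
        + N1 * β * p * γ / (N0 * k3 * k4))
    (Z W : Matrix (Fin 3) (Fin 3) ℝ)
    (hZ : Z = !![0, β * N1 / N0, β * η * N1 / N0; 0, 0, 0; 0, 0, 0])
    (hW : W = !![k3, 0, 0; -(p * γ), k4, 0; -(q * γ), -(a2 * σ), k5]) :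
    ∃ w : Fin 3 → ℝ, w ≠ 0 ∧ (∀ i, 0 ≤ w i) ∧ w ᵥ* (W⁻¹ * Z) = Rc • w :=
  exists_nonneg_left_eigenvector_general μ β η γ σ θ δ p q a2 hμ hη hγ hσ hθ hδ k3 k4 k5 N0 N1 Rc
    hk3 hk4 hk5 hRc Z W hZ hW
end

section
/- Lyapunov derivative identity: let (S,V,E,A,I,R) be a solution of the COVID-19 ODE model with N(t) > 0, and let w ∈ ℝ³ be a row vector satisfying wᵀ·(W⁻¹·Z) = R_c·wᵀ. Define Q(t) = wᵀ·W⁻¹·(E(t),A(t),I(t))ᵀ. Then Q is differentiable and Q'(t) = (R_c − 1)·wᵀ·(E(t),A(t),I(t))ᵀ − wᵀ·W⁻¹·M(t), where M(t) ∈ ℝ³ is the vector whose first component is β·(A(t)+η·I(t))·(N1/N0 − (S(t)+φ1·V(t)+φ2·R(t))/N(t)) and whose other two components are zero. -/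
/-!
Writing `x = (E, A, I)`, the infected equations read `x' = (Z - W) x - M`: the incidence term
`λ (S + φ₁V + φ₂R)` is `Z x` (new infections at the disease-free state) minus the correction
`M`. For `u = wᵀ W⁻¹` one has `u W = wᵀ` and `u Z = wᵀ (W⁻¹ Z) = R_c wᵀ`, so
`(u ⬝ x)' = u (Z - W) x - u M = (R_c - 1) wᵀ x - u M`.
-/

open Matrix

theorem HasDerivAt.const_dotProduct {𝕜 ι : Type*} [NontriviallyNormedField 𝕜] [Fintype ι]
    (u : ι → 𝕜) {x : 𝕜 → ι → 𝕜} {x' : ι → 𝕜} {t : 𝕜} (hx : HasDerivAt x x' t) :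
    HasDerivAt (fun s => u ⬝ᵥ x s) (u ⬝ᵥ x') t :=
  HasDerivAt.fun_sum fun i _ => (hasDerivAt_pi.1 hx i).const_mul (u i)

theorem hasDerivAt_vecMul_inv_dotProduct {𝕜 ι : Type*} [NontriviallyNormedField 𝕜] [Fintype ι]
    [DecidableEq ι] {W Z : Matrix ι ι 𝕜} (hW : IsUnit W.det) {w : ι → 𝕜} {R : 𝕜}
    (hw : w ᵥ* (W⁻¹ * Z) = R • w) {x : 𝕜 → ι → 𝕜} {m : ι → 𝕜} {t : 𝕜}
    (hx : HasDerivAt x ((Z - W) *ᵥ x t - m) t) :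
    HasDerivAt (fun s => (w ᵥ* W⁻¹) ⬝ᵥ x s)
      ((R - 1) * (w ⬝ᵥ x t) - (w ᵥ* W⁻¹) ⬝ᵥ m) t := by
  convert hx.const_dotProduct (w ᵥ* W⁻¹) using 1
  rw [dotProduct_sub, dotProduct_mulVec, vecMul_sub, vecMul_vecMul, vecMul_vecMul,
    nonsing_inv_mul W hW, vecMul_one, hw, sub_dotProduct, smul_dotProduct, smul_eq_mul]
  ring

theorem det_lowerTriangular_fin_three {R : Type*} [CommRing R] (a b c d e f : R) :
    (!![a, 0, 0; b, c, 0; d, e, f] : Matrix (Fin 3) (Fin 3) R).det = a * c * f := by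
  simp [det_fin_three]

theorem hasDerivAt_infected_compartments
    {β η γ σ p q a2 φ1 φ2 k3 k4 k5 N0 N1 t : ℝ} {S V E A I R N : ℝ → ℝ}
    (hE : HasDerivAt E
      (β * (A t + η * I t) / N t * (S t + φ1 * V t + φ2 * R t) - k3 * E t) t)
    (hA : HasDerivAt A (p * γ * E t - k4 * A t) t)
    (hI : HasDerivAt I (q * γ * E t + a2 * σ * A t - k5 * I t) t) :
    HasDerivAt (fun s => ![E s, A s, I s])
      ((!![0, β * N1 / N0, β * η * N1 / N0; 0, 0, 0; 0, 0, 0]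
          - !![k3, 0, 0; -(p * γ), k4, 0; -(q * γ), -(a2 * σ), k5]) *ᵥ ![E t, A t, I t]
        - ![β * (A t + η * I t) * (N1 / N0 - (S t + φ1 * V t + φ2 * R t) / N t), 0, 0]) t := by
  refine hasDerivAt_pi.2 fun i => ?_
  fin_cases i
  exacts [hE.congr_deriv (by simp; ring), hA.congr_deriv (by simp; ring),
    hI.congr_deriv (by simp; ring)]

theorem lyapunov_derivative_identity_general
    (μ β η γ σ θ δ p q a2 φ1 φ2 : ℝ)
    (hμ : 0 < μ) (hγ : 0 < γ) (hσ : 0 < σ) (hθ : 0 < θ) (hδ : 0 < δ)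
    (k3 k4 k5 N0 N1 Rc : ℝ)
    (hk3 : k3 = μ + γ) (hk4 : k4 = μ + σ) (hk5 : k5 = μ + δ + θ)
    (Z W : Matrix (Fin 3) (Fin 3) ℝ)
    (hZ : Z = !![0, β * N1 / N0, β * η * N1 / N0; 0, 0, 0; 0, 0, 0])
    (hW : W = !![k3, 0, 0; -(p * γ), k4, 0; -(q * γ), -(a2 * σ), k5])
    (S V E A I R N lam : ℝ → ℝ)
    (hlam : ∀ t, lam t = β * (A t + η * I t) / N t)
    (hE : ∀ t, HasDerivAt E (lam t * (S t + φ1 * V t + φ2 * R t) - k3 * E t) t)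
    (hA : ∀ t, HasDerivAt A (p * γ * E t - k4 * A t) t)
    (hI : ∀ t, HasDerivAt I (q * γ * E t + a2 * σ * A t - k5 * I t) t)
    (w : Fin 3 → ℝ) (hw : w ᵥ* (W⁻¹ * Z) = Rc • w)
    (Q : ℝ → ℝ)
    (hQ : ∀ t, Q t = (w ᵥ* W⁻¹) ⬝ᵥ ![E t, A t, I t])
    (M : ℝ → Fin 3 → ℝ)
    (hM : ∀ t, M t =
      ![β * (A t + η * I t) *
          (N1 / N0 - (S t + φ1 * V t + φ2 * R t) / N t), 0, 0]) :
    ∀ t, HasDerivAt Q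
      ((Rc - 1) * (w ⬝ᵥ ![E t, A t, I t]) - (w ᵥ* W⁻¹) ⬝ᵥ M t) t := by
  intro t
  have hWdet : IsUnit W.det := by
    rw [hW, det_lowerTriangular_fin_three, hk3, hk4, hk5]
    exact isUnit_iff_ne_zero.2 (by positivity)
  rw [show Q = fun s => (w ᵥ* W⁻¹) ⬝ᵥ ![E s, A s, I s] from funext hQ, hM t]
  refine hasDerivAt_vecMul_inv_dotProduct hWdet hw ?_
  rw [hZ, hW]
  exact hasDerivAt_infected_compartments (by simpa only [hlam] using hE t) (hA t) (hI t)

/-- Lyapunov derivative identity: along a solution of the COVID-19 ODE model,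
the function `Q(t) = wᵀ W⁻¹ (E,A,I)ᵀ` satisfies
`Q'(t) = (R_c - 1) wᵀ (E,A,I)ᵀ - wᵀ W⁻¹ M(t)`. -/
theorem lyapunov_derivative_identity
    (Λ μ β η γ σ θ δ c1 c2 r1 r2 p q a1 a2 φ1 φ2 : ℝ)
    (hΛ : 0 < Λ) (hμ : 0 < μ) (hβ : 0 < β) (hη : 0 < η) (hγ : 0 < γ)
    (hσ : 0 < σ) (hθ : 0 < θ) (hδ : 0 < δ) (hc1 : 0 < c1) (hc2 : 0 < c2)
    (hr1 : 0 < r1) (hr1' : r1 < 1) (hr2 : 0 < r2) (hr2' : r2 < 1)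
    (hp : 0 < p) (hp' : p < 1) (hq : 0 < q) (hq' : q < 1)
    (ha1 : 0 < a1) (ha1' : a1 < 1) (ha2 : 0 < a2) (ha2' : a2 < 1)
    (hr12 : r1 + r2 = 1) (hpq : p + q = 1) (ha12 : a1 + a2 = 1)
    (hφ1 : 0 ≤ φ1) (hφ1' : φ1 ≤ 1) (hφ2 : 0 ≤ φ2) (hφ2' : φ2 ≤ 1)
    (k1 k2 k3 k4 k5 k6 S0 V0 N0 N1 Rc : ℝ)
    (hk1 : k1 = c1 + μ) (hk2 : k2 = c2 + μ) (hk3 : k3 = μ + γ)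
    (hk4 : k4 = μ + σ) (hk5 : k5 = μ + δ + θ) (hk6 : k6 = k1 * k2 - c1 * c2)
    (hS0 : S0 = (c2 * r2 + r1 * k2) * Λ / k6)
    (hV0 : V0 = (k1 * r2 + c1 * r1) * Λ / k6)
    (hN0 : N0 = S0 + V0) (hN1 : N1 = S0 + φ1 * V0)
    (hRc : Rc = N1 * β * η * γ * (a2 * p * σ + k4 * q) / (N0 * k3 * k4 * k5)
        + N1 * β * p * γ / (N0 * k3 * k4))
    (Z W : Matrix (Fin 3) (Fin 3) ℝ)
    (hZ : Z = !![0, β * N1 / N0, β * η * N1 / N0; 0, 0, 0; 0, 0, 0])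
    (hW : W = !![k3, 0, 0; -(p * γ), k4, 0; -(q * γ), -(a2 * σ), k5])
    (S V E A I R N lam : ℝ → ℝ)
    (hN : ∀ t, N t = S t + V t + E t + A t + I t + R t)
    (hlam : ∀ t, lam t = β * (A t + η * I t) / N t)
    (hNpos : ∀ t, 0 < N t)
    (hS : ∀ t, HasDerivAt S (r1 * Λ + c2 * V t - (k1 + lam t) * S t) t)
    (hV : ∀ t, HasDerivAt V (r2 * Λ + c1 * S t - (k2 + φ1 * lam t) * V t) t)
    (hE : ∀ t, HasDerivAt E (lam t * (S t + φ1 * V t + φ2 * R t) - k3 * E t) t)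
    (hA : ∀ t, HasDerivAt A (p * γ * E t - k4 * A t) t)
    (hI : ∀ t, HasDerivAt I (q * γ * E t + a2 * σ * A t - k5 * I t) t)
    (hR : ∀ t, HasDerivAt R (a1 * σ * A t + θ * I t - (μ + φ2 * lam t) * R t) t)
    (w : Fin 3 → ℝ) (hw : w ᵥ* (W⁻¹ * Z) = Rc • w)
    (Q : ℝ → ℝ)
    (hQ : ∀ t, Q t = (w ᵥ* W⁻¹) ⬝ᵥ ![E t, A t, I t])
    (M : ℝ → Fin 3 → ℝ)
    (hM : ∀ t, M t =
      ![β * (A t + η * I t) *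
          (N1 / N0 - (S t + φ1 * V t + φ2 * R t) / N t), 0, 0]) :
    ∀ t, HasDerivAt Q
      ((Rc - 1) * (w ⬝ᵥ ![E t, A t, I t]) - (w ᵥ* W⁻¹) ⬝ᵥ M t) t :=
  lyapunov_derivative_identity_general μ β η γ σ θ δ p q a2 φ1 φ2 hμ hγ hσ hθ hδ k3 k4 k5 N0 N1 Rc
    hk3 hk4 hk5 Z W hZ hW S V E A I R N lam hlam hE hA hI w hw Q hQ M hM
end

section
/- Global asymptotic stability of the disease-free equilibrium (ODE model): suppose R_c < 1, and let (S,V,E,A,I,R) : [0,∞) → ℝ⁶ be a solution of the COVID-19 ODE model whose components are nonnegative with 0 < N(t) ≤ Λ/μ for all t ≥ 0, and which satisfies N1/N0 − (S(t)+φ1·V(t)+φ2·R(t))/N(t) ≥ 0 for all t ≥ 0. Then (S(t), V(t), E(t), A(t), I(t), R(t)) → (S0, V0, 0, 0, 0, 0) as t → ∞. -/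
/-!
Put `b = β N1 / N0`. The hypothesis on `(S + φ1 V + φ2 R) / N` bounds the incidence
`λ (S + φ1 V + φ2 R)` by `b (A + η I)`, so `(E, A, I)` is dominated by a linear system whose
reproduction number is `R_c < 1`. A positive weighted sum `E + α A + ι I` is then a strict
Lyapunov function, and the infected compartments die out. After that, `R` and the linear exchange
system for `(S, V)` are driven by vanishing inputs, and the scalar comparison principle
"`x' ≤ -κ x + g` with `g → 0` forces `limsup x ≤ 0`" (a consequence of Grönwall's inequality)
gives convergence to the disease-free equilibrium.
-/

open Filter Topology

section LinearDifferentialInequality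

variable {x x' g : ℝ → ℝ} {κ : ℝ}

theorem eventually_lt_of_deriv_le_neg_mul_add (hκ : 0 < κ)
    (hx : ∀ t, 0 ≤ t → HasDerivAt x (x' t) t)
    (hle : ∀ t, 0 ≤ t → x' t ≤ -κ * x t + g t) (hg : Tendsto g atTop (𝓝 0))
    {δ : ℝ} (hδ : 0 < δ) : ∀ᶠ t in atTop, x t < δ := by
  -- Past `T`, `x' ≤ -κ x + κ δ / 2`, so Grönwall bounds `x` by a function tending to `δ / 2`.
  obtain ⟨T, hT⟩ := eventually_atTop.1 <|
    (hg.eventually (gt_mem_nhds (by positivity : 0 < κ * δ / 2))).and (eventually_ge_atTop 0)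
  have hbound : ∀ t, T ≤ t → x t ≤ gronwallBound (x T) (-κ) (κ * δ / 2) (t - T) := by
    intro t ht
    refine le_gronwallBound_of_liminf_deriv_right_le (f' := x') ?_ ?_ le_rfl ?_ t ⟨ht, le_rfl⟩
    · exact fun y hy => (hx y ((hT T le_rfl).2.trans hy.1)).continuousAt.continuousWithinAt
    · exact fun y hy r hr =>
        (hx y ((hT T le_rfl).2.trans hy.1)).hasDerivWithinAt.liminf_right_slope_le hr
    · exact fun y hy => (hle y (hT y hy.1).2).trans (by linarith [(hT y hy.1).1])
  have hdecay : Tendsto (fun t => Real.exp (-κ * (t - T))) atTop (𝓝 0) :=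
    Real.tendsto_exp_atBot.comp <|
      (tendsto_atTop_add_const_right _ _ tendsto_id).const_mul_atTop_of_neg (neg_lt_zero.2 hκ)
  have hlim : Tendsto (fun t => gronwallBound (x T) (-κ) (κ * δ / 2) (t - T)) atTop
      (𝓝 (δ / 2)) := by
    rw [gronwallBound_of_K_ne_0 (neg_ne_zero.2 hκ.ne')]
    convert (hdecay.const_mul (x T)).add ((hdecay.sub_const 1).const_mul (κ * δ / 2 / -κ))
      using 2
    field_simp
    ring
  filter_upwards [eventually_ge_atTop T, hlim.eventually (gt_mem_nhds (half_lt_self hδ))]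
    with t ht hlt
  exact (hbound t ht).trans_lt hlt

theorem tendsto_zero_of_deriv_le_neg_mul_add_of_nonneg (hκ : 0 < κ)
    (hx : ∀ t, 0 ≤ t → HasDerivAt x (x' t) t)
    (hle : ∀ t, 0 ≤ t → x' t ≤ -κ * x t + g t) (hg : Tendsto g atTop (𝓝 0))
    (hx₀ : ∀ t, 0 ≤ t → 0 ≤ x t) : Tendsto x atTop (𝓝 0) :=
  tendsto_order.2 ⟨fun _ ha => (eventually_ge_atTop 0).mono fun t ht => ha.trans_le (hx₀ t ht),
    fun _ hδ => eventually_lt_of_deriv_le_neg_mul_add hκ hx hle hg hδ⟩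

theorem tendsto_zero_of_hasDerivAt_neg_mul_add (hκ : 0 < κ)
    (hx : ∀ t, 0 ≤ t → HasDerivAt x (-κ * x t + g t) t) (hg : Tendsto g atTop (𝓝 0)) :
    Tendsto x atTop (𝓝 0) := by
  refine tendsto_order.2 ⟨fun a ha => ?_,
    fun _ hδ => eventually_lt_of_deriv_le_neg_mul_add hκ hx (fun _ _ => le_rfl) hg hδ⟩
  have hneg := eventually_lt_of_deriv_le_neg_mul_add (x := fun t => -x t)
    (g := fun t => -g t) hκ (fun t ht => (hx t ht).neg) (fun t _ => by linarith)
    (by simpa using hg.neg) (neg_pos.2 ha)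
  filter_upwards [hneg] with t ht
  linarith

end LinearDifferentialInequality

theorem exists_lyapunov_weights {b η γ σ p q a2 k3 k4 k5 : ℝ} (hb : 0 ≤ b) (hη : 0 ≤ η)
    (hγ : 0 < γ) (ha2 : 0 ≤ a2) (hσ : 0 ≤ σ) (ha2σ : a2 * σ < k4) (hk3 : 0 < k3)
    (hk5 : 0 < k5) (hpq : p + q = 1)
    (hR : b * η * γ * (a2 * p * σ + k4 * q) / (k3 * k4 * k5) + b * p * γ / (k3 * k4) < 1) :
    ∃ α ι κ : ℝ, 0 < α ∧ 0 < ι ∧ 0 < κ ∧ γ * (p * α + q * ι) - k3 ≤ -κ ∧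
      b + a2 * σ * ι - k4 * α ≤ -κ * α ∧ b * η - k5 * ι ≤ -κ * ι := by
  set R := b * η * γ * (a2 * p * σ + k4 * q) / (k3 * k4 * k5) + b * p * γ / (k3 * k4)
  have hk4 : 0 < k4 := (mul_nonneg ha2 hσ).trans_lt ha2σ
  -- `(a₀, i₀)` are the weights making `E + a₀ A + i₀ I` neutral in `A` and `I`; shifting both by
  -- `s` trades half of the margin `k3 (1 - R)` in `E` for strict decrease in `A` and `I`.
  set i₀ := b * η / k5
  set a₀ := (b + a2 * σ * i₀) / k4
  set s := k3 * (1 - R) / (2 * γ)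
  have hi₀ : 0 ≤ i₀ := by positivity
  have ha₀ : 0 ≤ a₀ := by positivity
  have hs : 0 < s := div_pos (mul_pos hk3 (sub_pos.2 hR)) (by positivity)
  have hα : 0 < a₀ + s := by positivity
  have hι : 0 < i₀ + s := by positivity
  have hR_eq : γ * (p * a₀ + q * i₀) = k3 * R := by
    simp only [a₀, i₀, R]
    field_simp
    ring
  have hγs : γ * s = k3 * (1 - R) / 2 := by
    simp only [s]
    field_simp
  have hk4a₀ : k4 * a₀ = b + a2 * σ * i₀ := by
    simp only [a₀]
    field_simp
  have hk5i₀ : k5 * i₀ = b * η := by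
    simp only [i₀]
    field_simp
  clear_value R i₀ a₀ s
  set κ := min (k3 * (1 - R) / 2) (min ((k4 - a2 * σ) * s / (a₀ + s)) (k5 * s / (i₀ + s)))
  have hκE : κ ≤ k3 * (1 - R) / 2 := min_le_left _ _
  have hκA : κ * (a₀ + s) ≤ (k4 - a2 * σ) * s :=
    (le_div_iff₀ hα).1 ((min_le_right _ _).trans (min_le_left _ _))
  have hκI : κ * (i₀ + s) ≤ k5 * s :=
    (le_div_iff₀ hι).1 ((min_le_right _ _).trans (min_le_right _ _))
  refine ⟨a₀ + s, i₀ + s, κ, hα, hι, ?_, ?_, ?_, ?_⟩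
  · exact lt_min (half_pos (mul_pos hk3 (sub_pos.2 hR)))
      (lt_min (div_pos (mul_pos (sub_pos.2 ha2σ) hs) hα) (by positivity))
  · linear_combination hκE + hR_eq + (p + q) * hγs + k3 * (1 - R) / 2 * hpq
  · linear_combination hκA - hk4a₀
  · linear_combination hκI - hk5i₀

theorem tendsto_infected_zero {E A I F : ℝ → ℝ} {b η γ σ p q a2 k3 k4 k5 : ℝ} (hb : 0 ≤ b)
    (hη : 0 ≤ η) (hγ : 0 < γ) (ha2 : 0 ≤ a2) (hσ : 0 ≤ σ) (ha2σ : a2 * σ < k4) (hk3 : 0 < k3)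
    (hk5 : 0 < k5) (hpq : p + q = 1)
    (hR : b * η * γ * (a2 * p * σ + k4 * q) / (k3 * k4 * k5) + b * p * γ / (k3 * k4) < 1)
    (hE : ∀ t, 0 ≤ t → HasDerivAt E (F t - k3 * E t) t)
    (hA : ∀ t, 0 ≤ t → HasDerivAt A (p * γ * E t - k4 * A t) t)
    (hI : ∀ t, 0 ≤ t → HasDerivAt I (q * γ * E t + a2 * σ * A t - k5 * I t) t)
    (hF : ∀ t, 0 ≤ t → F t ≤ b * (A t + η * I t))
    (hE₀ : ∀ t, 0 ≤ t → 0 ≤ E t) (hA₀ : ∀ t, 0 ≤ t → 0 ≤ A t) (hI₀ : ∀ t, 0 ≤ t → 0 ≤ I t) :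
    Tendsto E atTop (𝓝 0) ∧ Tendsto A atTop (𝓝 0) ∧ Tendsto I atTop (𝓝 0) := by
  obtain ⟨α, ι, κ, hα, hι, hκ, hcE, hcA, hcI⟩ :=
    exists_lyapunov_weights hb hη hγ ha2 hσ ha2σ hk3 hk5 hpq hR
  have hL : Tendsto (fun t => E t + α * A t + ι * I t) atTop (𝓝 0) := by
    refine tendsto_zero_of_deriv_le_neg_mul_add_of_nonneg (g := 0) hκ
      (fun t ht => ((hE t ht).add ((hA t ht).const_mul α)).add ((hI t ht).const_mul ι))
      (fun t ht => ?_) tendsto_const_nhds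
      (fun t ht => by have := hE₀ t ht; have := hA₀ t ht; have := hI₀ t ht; positivity)
    have := mul_le_mul_of_nonneg_right hcE (hE₀ t ht)
    have := mul_le_mul_of_nonneg_right hcA (hA₀ t ht)
    have := mul_le_mul_of_nonneg_right hcI (hI₀ t ht)
    have := hF t ht
    simp only [Pi.zero_apply]
    linarith
  have hdominated (c : ℝ) (hc : 0 < c) (X : ℝ → ℝ) (hX₀ : ∀ t, 0 ≤ t → 0 ≤ X t)
      (hXL : ∀ t, 0 ≤ t → c * X t ≤ E t + α * A t + ι * I t) : Tendsto X atTop (𝓝 0) :=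
    squeeze_zero' (eventually_atTop.2 ⟨0, hX₀⟩)
      (eventually_atTop.2 ⟨0, fun t ht => (le_inv_mul_iff₀ hc).2 (hXL t ht)⟩)
      (by simpa using hL.const_mul c⁻¹)
  refine ⟨hdominated 1 one_pos E hE₀ fun t ht => ?_, hdominated α hα A hA₀ fun t ht => ?_,
    hdominated ι hι I hI₀ fun t ht => ?_⟩ <;>
  · have := hE₀ t ht; have := hA₀ t ht; have := hI₀ t ht
    nlinarith

theorem tendsto_equilibrium_of_exchange {S V f g : ℝ → ℝ} {b₁ b₂ c₁ c₂ μ S₀ V₀ : ℝ}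
    (hμ : 0 < μ) (hc : 0 < c₁ + c₂)
    (hS₀ : (c₁ + μ) * S₀ = b₁ + c₂ * V₀) (hV₀ : (c₂ + μ) * V₀ = b₂ + c₁ * S₀)
    (hS : ∀ t, 0 ≤ t → HasDerivAt S (b₁ + c₂ * V t - (c₁ + μ) * S t - f t) t)
    (hV : ∀ t, 0 ≤ t → HasDerivAt V (b₂ + c₁ * S t - (c₂ + μ) * V t - g t) t)
    (hf : Tendsto f atTop (𝓝 0)) (hg : Tendsto g atTop (𝓝 0)) :
    Tendsto S atTop (𝓝 S₀) ∧ Tendsto V atTop (𝓝 V₀) := by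
  -- The total `S + V` relaxes at rate `μ`, the imbalance `c₁ S - c₂ V` at rate `c₁ + c₂ + μ`.
  have hw : Tendsto (fun t => S t + V t - (S₀ + V₀)) atTop (𝓝 0) :=
    tendsto_zero_of_hasDerivAt_neg_mul_add (g := fun t => -(f t + g t)) hμ
      (fun t ht => (((hS t ht).add (hV t ht)).sub_const _).congr_deriv
        (by linear_combination -hS₀ - hV₀))
      (by simpa using (hf.add hg).neg)
  have hz : Tendsto (fun t => c₁ * (S t - S₀) - c₂ * (V t - V₀)) atTop (𝓝 0) :=
    tendsto_zero_of_hasDerivAt_neg_mul_add (κ := c₁ + c₂ + μ) (g := fun t => c₂ * g t - c₁ * f t)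
      (by linarith)
      (fun t ht => ((((hS t ht).sub_const S₀).const_mul c₁).sub
        (((hV t ht).sub_const V₀).const_mul c₂)).congr_deriv
          (by linear_combination c₂ * hV₀ - c₁ * hS₀))
      (by simpa using (hg.const_mul c₂).sub (hf.const_mul c₁))
  constructor
  · have := tendsto_const_nhds (x := S₀).add (((hw.const_mul c₂).add hz).div_const (c₁ + c₂))
    simp only [mul_zero, add_zero, zero_div] at this
    refine this.congr fun t => ?_
    field_simp
    ring
  · have := tendsto_const_nhds (x := V₀).add (((hw.const_mul c₁).sub hz).div_const (c₁ + c₂))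
    simp only [mul_zero, sub_zero, add_zero, zero_div] at this
    refine this.congr fun t => ?_
    field_simp
    ring

section Incidence

variable {β η : ℝ} {A I N X : ℝ → ℝ}

theorem incidence_le_of_div_le {a i n x ρ : ℝ} (hβ : 0 ≤ β) (hη : 0 ≤ η) (ha : 0 ≤ a)
    (hi : 0 ≤ i) (hx : x / n ≤ ρ) : β * (a + η * i) / n * x ≤ β * ρ * (a + η * i) := by
  calc β * (a + η * i) / n * x = β * (a + η * i) * (x / n) := by ring
    _ ≤ β * (a + η * i) * ρ := mul_le_mul_of_nonneg_left hx (by positivity)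
    _ = β * ρ * (a + η * i) := by ring

theorem tendsto_incidence_zero (hβ : 0 ≤ β) (hη : 0 ≤ η)
    (hN : ∀ t, 0 ≤ t → 0 < N t) (hX₀ : ∀ t, 0 ≤ t → 0 ≤ X t) (hXN : ∀ t, 0 ≤ t → X t ≤ N t)
    (hA₀ : ∀ t, 0 ≤ t → 0 ≤ A t) (hI₀ : ∀ t, 0 ≤ t → 0 ≤ I t)
    (hA : Tendsto A atTop (𝓝 0)) (hI : Tendsto I atTop (𝓝 0)) :
    Tendsto (fun t => β * (A t + η * I t) / N t * X t) atTop (𝓝 0) := by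
  refine squeeze_zero' (eventually_atTop.2 ⟨0, fun t ht => ?_⟩)
    (eventually_atTop.2 ⟨0, fun t ht => ?_⟩) (g := fun t => β * (A t + η * I t))
    (by simpa using (hA.add (hI.const_mul η)).const_mul β)
  · have := hN t ht; have := hA₀ t ht; have := hI₀ t ht; have := hX₀ t ht
    positivity
  · simpa using incidence_le_of_div_le hβ hη (hA₀ t ht) (hI₀ t ht)
      ((div_le_one (hN t ht)).2 (hXN t ht))

end Incidence

theorem dfe_balance {Λ μ c1 c2 r1 r2 S0 V0 : ℝ} (hμ : 0 < μ) (hc : 0 ≤ c1 + c2)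
    (hS0 : S0 = (c2 * r2 + r1 * (c2 + μ)) * Λ / ((c1 + μ) * (c2 + μ) - c1 * c2))
    (hV0 : V0 = ((c1 + μ) * r2 + c1 * r1) * Λ / ((c1 + μ) * (c2 + μ) - c1 * c2)) :
    (c1 + μ) * S0 = r1 * Λ + c2 * V0 ∧ (c2 + μ) * V0 = r2 * Λ + c1 * S0 := by
  have hdet : (c1 + μ) * (c2 + μ) - c1 * c2 = μ * (c1 + c2 + μ) := by ring
  have : c1 + c2 + μ ≠ 0 := by positivity
  rw [hdet] at hS0 hV0
  subst hS0 hV0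
  constructor <;> (field_simp; ring)

theorem dfe_globally_asymptotically_stable_general
    (Λ μ β η γ σ θ δ c1 c2 r1 r2 p q a1 a2 φ1 φ2 : ℝ)
    (hμ : 0 < μ) (hβ : 0 < β) (hη : 0 < η) (hγ : 0 < γ)
    (hσ : 0 < σ) (hθ : 0 < θ) (hδ : 0 < δ) (hc1 : 0 < c1) (hc2 : 0 < c2)
    (ha2 : 0 < a2) (ha2' : a2 < 1)
    (hpq : p + q = 1)
    (hφ1 : 0 ≤ φ1) (hφ2 : 0 ≤ φ2)
    (k1 k2 k3 k4 k5 k6 S0 V0 N0 N1 Rc : ℝ)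
    (hk1 : k1 = c1 + μ) (hk2 : k2 = c2 + μ) (hk3 : k3 = μ + γ)
    (hk4 : k4 = μ + σ) (hk5 : k5 = μ + δ + θ) (hk6 : k6 = k1 * k2 - c1 * c2)
    (hS0 : S0 = (c2 * r2 + r1 * k2) * Λ / k6)
    (hV0 : V0 = (k1 * r2 + c1 * r1) * Λ / k6)
    (hRc : Rc = N1 * β * η * γ * (a2 * p * σ + k4 * q) / (N0 * k3 * k4 * k5)
        + N1 * β * p * γ / (N0 * k3 * k4))
    (hRclt : Rc < 1)
    (S V E A I R N lam : ℝ → ℝ)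
    (hN : ∀ t, N t = S t + V t + E t + A t + I t + R t)
    (hlam : ∀ t, lam t = β * (A t + η * I t) / N t)
    (hS : ∀ t, 0 ≤ t → HasDerivAt S (r1 * Λ + c2 * V t - (k1 + lam t) * S t) t)
    (hV : ∀ t, 0 ≤ t → HasDerivAt V (r2 * Λ + c1 * S t - (k2 + φ1 * lam t) * V t) t)
    (hE : ∀ t, 0 ≤ t →
      HasDerivAt E (lam t * (S t + φ1 * V t + φ2 * R t) - k3 * E t) t)
    (hA : ∀ t, 0 ≤ t → HasDerivAt A (p * γ * E t - k4 * A t) t)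
    (hI : ∀ t, 0 ≤ t → HasDerivAt I (q * γ * E t + a2 * σ * A t - k5 * I t) t)
    (hR : ∀ t, 0 ≤ t →
      HasDerivAt R (a1 * σ * A t + θ * I t - (μ + φ2 * lam t) * R t) t)
    (hnonneg : ∀ t, 0 ≤ t →
      0 ≤ S t ∧ 0 ≤ V t ∧ 0 ≤ E t ∧ 0 ≤ A t ∧ 0 ≤ I t ∧ 0 ≤ R t)
    (hNbound : ∀ t, 0 ≤ t → 0 < N t ∧ N t ≤ Λ / μ)
    (hcond : ∀ t, 0 ≤ t →
      0 ≤ N1 / N0 - (S t + φ1 * V t + φ2 * R t) / N t) :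
    Tendsto S atTop (nhds S0) ∧ Tendsto V atTop (nhds V0) ∧
    Tendsto E atTop (nhds 0) ∧ Tendsto A atTop (nhds 0) ∧
    Tendsto I atTop (nhds 0) ∧ Tendsto R atTop (nhds 0) := by
  subst hk1 hk2 hk6
  choose hS₀ hV₀ hE₀ hA₀ hI₀ hR₀ using hnonneg
  choose hNpos _ using hNbound
  have hb : 0 ≤ β * (N1 / N0) := by
    have := hS₀ 0 le_rfl; have := hV₀ 0 le_rfl; have := hR₀ 0 le_rfl; have := hNpos 0 le_rfl
    exact mul_nonneg hβ.le ((by positivity : (0 : ℝ) ≤ _).trans (sub_nonneg.1 (hcond 0 le_rfl)))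
  have hforce (t : ℝ) (ht : 0 ≤ t) :
      lam t * (S t + φ1 * V t + φ2 * R t) ≤ β * (N1 / N0) * (A t + η * I t) := by
    rw [hlam]
    exact incidence_le_of_div_le hβ.le hη.le (hA₀ t ht) (hI₀ t ht) (sub_nonneg.1 (hcond t ht))
  obtain ⟨hEl, hAl, hIl⟩ := tendsto_infected_zero hb hη.le hγ ha2.le hσ.le
    (by rw [hk4]; nlinarith [mul_le_mul_of_nonneg_right ha2'.le hσ.le])
    (by rw [hk3]; positivity) (by rw [hk5]; positivity) hpq
    (by rw [hRc] at hRclt; convert hRclt using 1; ring) hE hA hI hforce hE₀ hA₀ hI₀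
  have hlam₀ (t : ℝ) (ht : 0 ≤ t) : 0 ≤ lam t := by
    rw [hlam]; have := hA₀ t ht; have := hI₀ t ht; have := hNpos t ht; positivity
  have hRl : Tendsto R atTop (𝓝 0) :=
    tendsto_zero_of_deriv_le_neg_mul_add_of_nonneg (g := fun t => a1 * σ * A t + θ * I t) hμ hR
      (fun t ht => by linarith [mul_nonneg (mul_nonneg hφ2 (hlam₀ t ht)) (hR₀ t ht)])
      (by simpa using (hAl.const_mul (a1 * σ)).add (hIl.const_mul θ)) hR₀
  have hincidence (X : ℝ → ℝ) (hX₀ : ∀ t, 0 ≤ t → 0 ≤ X t) (hXN : ∀ t, 0 ≤ t → X t ≤ N t) :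
      Tendsto (fun t => lam t * X t) atTop (𝓝 0) := by
    simpa only [hlam] using tendsto_incidence_zero hβ.le hη.le hNpos hX₀ hXN hA₀ hI₀ hAl hIl
  have hSVN (t : ℝ) (ht : 0 ≤ t) : S t ≤ N t ∧ V t ≤ N t := by
    rw [hN]
    constructor <;> linarith [hS₀ t ht, hV₀ t ht, hE₀ t ht, hA₀ t ht, hI₀ t ht, hR₀ t ht]
  obtain ⟨hSbal, hVbal⟩ := dfe_balance hμ (add_pos hc1 hc2).le hS0 hV0
  obtain ⟨hSl, hVl⟩ := tendsto_equilibrium_of_exchange (f := fun t => lam t * S t)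
    (g := fun t => φ1 * (lam t * V t)) hμ (add_pos hc1 hc2) hSbal hVbal
    (fun t ht => (hS t ht).congr_deriv (by ring)) (fun t ht => (hV t ht).congr_deriv (by ring))
    (hincidence S hS₀ fun t ht => (hSVN t ht).1)
    (by simpa using (hincidence V hV₀ fun t ht => (hSVN t ht).2).const_mul φ1)
  exact ⟨hSl, hVl, hEl, hAl, hIl, hRl⟩

/-- Global asymptotic stability of the disease-free equilibrium of the COVID-19 ODE
model: if `R_c < 1` and the solution stays nonnegative in the feasible region with
`N1/N0 - (S + φ1 V + φ2 R)/N ≥ 0`, then the solution converges to the DFE. -/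
theorem dfe_globally_asymptotically_stable
    (Λ μ β η γ σ θ δ c1 c2 r1 r2 p q a1 a2 φ1 φ2 : ℝ)
    (hΛ : 0 < Λ) (hμ : 0 < μ) (hβ : 0 < β) (hη : 0 < η) (hγ : 0 < γ)
    (hσ : 0 < σ) (hθ : 0 < θ) (hδ : 0 < δ) (hc1 : 0 < c1) (hc2 : 0 < c2)
    (hr1 : 0 < r1) (hr1' : r1 < 1) (hr2 : 0 < r2) (hr2' : r2 < 1)
    (hp : 0 < p) (hp' : p < 1) (hq : 0 < q) (hq' : q < 1)
    (ha1 : 0 < a1) (ha1' : a1 < 1) (ha2 : 0 < a2) (ha2' : a2 < 1)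
    (hr12 : r1 + r2 = 1) (hpq : p + q = 1) (ha12 : a1 + a2 = 1)
    (hφ1 : 0 ≤ φ1) (hφ1' : φ1 ≤ 1) (hφ2 : 0 ≤ φ2) (hφ2' : φ2 ≤ 1)
    (k1 k2 k3 k4 k5 k6 S0 V0 N0 N1 Rc : ℝ)
    (hk1 : k1 = c1 + μ) (hk2 : k2 = c2 + μ) (hk3 : k3 = μ + γ)
    (hk4 : k4 = μ + σ) (hk5 : k5 = μ + δ + θ) (hk6 : k6 = k1 * k2 - c1 * c2)
    (hS0 : S0 = (c2 * r2 + r1 * k2) * Λ / k6)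
    (hV0 : V0 = (k1 * r2 + c1 * r1) * Λ / k6)
    (hN0 : N0 = S0 + V0) (hN1 : N1 = S0 + φ1 * V0)
    (hRc : Rc = N1 * β * η * γ * (a2 * p * σ + k4 * q) / (N0 * k3 * k4 * k5)
        + N1 * β * p * γ / (N0 * k3 * k4))
    (hRclt : Rc < 1)
    (S V E A I R N lam : ℝ → ℝ)
    (hN : ∀ t, N t = S t + V t + E t + A t + I t + R t)
    (hlam : ∀ t, lam t = β * (A t + η * I t) / N t)
    (hS : ∀ t, 0 ≤ t → HasDerivAt S (r1 * Λ + c2 * V t - (k1 + lam t) * S t) t)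
    (hV : ∀ t, 0 ≤ t → HasDerivAt V (r2 * Λ + c1 * S t - (k2 + φ1 * lam t) * V t) t)
    (hE : ∀ t, 0 ≤ t →
      HasDerivAt E (lam t * (S t + φ1 * V t + φ2 * R t) - k3 * E t) t)
    (hA : ∀ t, 0 ≤ t → HasDerivAt A (p * γ * E t - k4 * A t) t)
    (hI : ∀ t, 0 ≤ t → HasDerivAt I (q * γ * E t + a2 * σ * A t - k5 * I t) t)
    (hR : ∀ t, 0 ≤ t →
      HasDerivAt R (a1 * σ * A t + θ * I t - (μ + φ2 * lam t) * R t) t)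
    (hnonneg : ∀ t, 0 ≤ t →
      0 ≤ S t ∧ 0 ≤ V t ∧ 0 ≤ E t ∧ 0 ≤ A t ∧ 0 ≤ I t ∧ 0 ≤ R t)
    (hNbound : ∀ t, 0 ≤ t → 0 < N t ∧ N t ≤ Λ / μ)
    (hcond : ∀ t, 0 ≤ t →
      0 ≤ N1 / N0 - (S t + φ1 * V t + φ2 * R t) / N t) :
    Tendsto S atTop (nhds S0) ∧ Tendsto V atTop (nhds V0) ∧
    Tendsto E atTop (nhds 0) ∧ Tendsto A atTop (nhds 0) ∧
    Tendsto I atTop (nhds 0) ∧ Tendsto R atTop (nhds 0) :=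
  dfe_globally_asymptotically_stable_general Λ μ β η γ σ θ δ c1 c2 r1 r2 p q a1 a2 φ1 φ2 hμ hβ hη hγ
    hσ hθ hδ hc1 hc2 ha2 ha2' hpq hφ1 hφ2 k1 k2 k3 k4 k5 k6 S0 V0 N0 N1 Rc hk1 hk2 hk3 hk4 hk5 hk6
    hS0 hV0 hRc hRclt S V E A I R N lam hN hlam hS hV hE hA hI hR hnonneg hNbound hcond
end

section
/- Factorization of the characteristic polynomial of the Jacobian at the DFE: the characteristic polynomial of the 6×6 matrix J(E0) factors (as a polynomial in ν with real coefficients) as det(ν·I₆ − J(E0)) = (ν+μ)·(ν² + (k1+k2)·ν + μ·(μ+c1+c2))·g(ν), where g is the monic cubic g(ν) = ν³ + ϖ2·ν² + ϖ1·ν + ϖ0 with ϖ2 = k3+k4+k5, ϖ0 = (1−R_c)·k3·k4·k5, and ϖ1 = [ (1−R_c)·(p+η·q)·k3·k4·k5 + (k4+k3)·(k5+a2·η·σ)·k5·p + ((k5+k3)·k4·q + k3·a2·p·σ)·k4·η ] / (a2·η·p·σ + k4·η·q + k5·p). -/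
/-!
At the disease-free equilibrium the Jacobian is block triangular, with diagonal blocks on the
coordinates `{1, 2}`, `{3, 4, 5}` and `{6}`, so its characteristic polynomial is the product of
those of a `2 × 2`, a `3 × 3` and a `1 × 1` block. Expanding the `3 × 3` block gives the cubic
once one notices that `R_c · k₃k₄k₅ = (βN₁/N₀) γ D` with `D = a₂ηpσ + k₄ηq + k₅p`, which is
exactly the denominator of `ϖ₁`.
-/

open Matrix Polynomial

namespace Matrix

variable {R : Type*} [CommRing R]

theorem charpoly_fin_one_eq {a s : R} (hs : -a = s) : (!![a]).charpoly = X + C s := by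
  subst hs
  simp [charpoly]
  ring

theorem charpoly_fin_two_eq {a b c d s₁ s₀ : R} (hs₁ : -(a + d) = s₁)
    (hs₀ : a * d - b * c = s₀) :
    (!![a, b; c, d]).charpoly = X ^ 2 + C s₁ * X + C s₀ := by
  subst hs₁ hs₀
  simp [charpoly, det_fin_two]
  ring

theorem charpoly_fin_three_eq {a b c d e f g h k s₂ s₁ s₀ : R} (hs₂ : -(a + e + k) = s₂)
    (hs₁ : a * e - b * d + a * k - c * g + e * k - f * h = s₁)
    (hs₀ : -(a * e * k - a * f * h - b * d * k + b * f * g + c * d * h - c * e * g) = s₀) :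
    (!![a, b, c; d, e, f; g, h, k]).charpoly = X ^ 3 + C s₂ * X ^ 2 + C s₁ * X + C s₀ := by
  subst hs₂ hs₁ hs₀
  simp [charpoly, det_fin_three]
  ring

theorem charpoly_eq_mul_of_lower_left_eq_zero {m n : ℕ}
    (M : Matrix (Fin (m + n)) (Fin (m + n)) R)
    (h : ∀ i j, M (Fin.natAdd m i) (Fin.castAdd n j) = 0) :
    M.charpoly = (M.submatrix (Fin.castAdd n) (Fin.castAdd n)).charpoly *
      (M.submatrix (Fin.natAdd m) (Fin.natAdd m)).charpoly := by
  have h₂₁ : (reindex finSumFinEquiv.symm finSumFinEquiv.symm M).toBlocks₂₁ = 0 := by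
    ext i j
    exact h i j
  rw [← charpoly_reindex finSumFinEquiv.symm M, ← fromBlocks_toBlocks (reindex _ _ M), h₂₁,
    charpoly_fromBlocks_zero₂₁]
  rfl

theorem charpoly_eq_mul_of_upper_right_eq_zero {m n : ℕ}
    (M : Matrix (Fin (m + n)) (Fin (m + n)) R)
    (h : ∀ i j, M (Fin.castAdd n i) (Fin.natAdd m j) = 0) :
    M.charpoly = (M.submatrix (Fin.castAdd n) (Fin.castAdd n)).charpoly *
      (M.submatrix (Fin.natAdd m) (Fin.natAdd m)).charpoly := by
  have h₁₂ : (reindex finSumFinEquiv.symm finSumFinEquiv.symm M).toBlocks₁₂ = 0 := by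
    ext i j
    exact h i j
  rw [← charpoly_reindex finSumFinEquiv.symm M, ← fromBlocks_toBlocks (reindex _ _ M), h₁₂,
    charpoly_fromBlocks_zero₁₂]
  rfl

end Matrix

theorem charpoly_factorization_at_dfe_general
    (μ β η γ σ θ δ c1 c2 p q a1 a2 φ1 : ℝ)
    (hμ : 0 < μ) (hη : 0 < η) (hγ : 0 < γ) (hσ : 0 < σ) (hθ : 0 < θ) (hδ : 0 < δ)
    (hp : 0 < p) (hq : 0 < q) (ha2 : 0 < a2)
    (k1 k2 k3 k4 k5 S0 V0 N0 N1 Rc : ℝ)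
    (hk1 : k1 = c1 + μ) (hk2 : k2 = c2 + μ) (hk3 : k3 = μ + γ)
    (hk4 : k4 = μ + σ) (hk5 : k5 = μ + δ + θ)
    (hRc : Rc = N1 * β * η * γ * (a2 * p * σ + k4 * q) / (N0 * k3 * k4 * k5)
        + N1 * β * p * γ / (N0 * k3 * k4))
    (J : Matrix (Fin 6) (Fin 6) ℝ)
    (hJ : J = !![-k1, c2, 0, -(β * S0 / N0), -(β * η * S0 / N0), 0;
                 c1, -k2, 0, -(β * φ1 * V0 / N0), -(β * η * φ1 * V0 / N0), 0;
                 0, 0, -k3, β * N1 / N0, β * η * N1 / N0, 0;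
                 0, 0, p * γ, -k4, 0, 0;
                 0, 0, q * γ, a2 * σ, -k5, 0;
                 0, 0, 0, a1 * σ, θ, -μ])
    (w2 w1 w0 : ℝ)
    (hw2 : w2 = k3 + k4 + k5)
    (hw1 : w1 = ((1 - Rc) * (p + η * q) * k3 * k4 * k5
        + (k4 + k3) * (k5 + a2 * η * σ) * k5 * p
        + ((k5 + k3) * k4 * q + k3 * a2 * p * σ) * k4 * η)
        / (a2 * η * p * σ + k4 * η * q + k5 * p))
    (hw0 : w0 = (1 - Rc) * k3 * k4 * k5) :
    J.charpoly =
      (X + C μ) * (X ^ 2 + C (k1 + k2) * X + C (μ * (μ + c1 + c2))) *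
        (X ^ 3 + C w2 * X ^ 2 + C w1 * X + C w0) := by
  have hk3pos : 0 < k3 := hk3 ▸ by positivity
  have hk4pos : 0 < k4 := hk4 ▸ by positivity
  have hk5pos : 0 < k5 := hk5 ▸ by positivity
  have hD : 0 < a2 * η * p * σ + k4 * η * q + k5 * p := by positivity
  have hRcD : Rc * (k3 * k4 * k5) =
      β * N1 / N0 * γ * (a2 * η * p * σ + k4 * η * q + k5 * p) := by
    rw [hRc]
    field_simp
  have hJ₂₁ : ∀ (i : Fin 4) (j : Fin 2), J (Fin.natAdd 2 i) (Fin.castAdd 4 j) = 0 := by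
    subst hJ; intro i j; fin_cases i <;> fin_cases j <;> rfl
  have hJ₁ : J.submatrix (Fin.castAdd 4) (Fin.castAdd 4) = !![-k1, c2; c1, -k2] := by
    subst hJ; ext i j; fin_cases i <;> fin_cases j <;> rfl
  set J₂ : Matrix (Fin 4) (Fin 4) ℝ := J.submatrix (Fin.natAdd 2) (Fin.natAdd 2)
  have hJ₂₁₂ : ∀ (i : Fin 3) (j : Fin 1), J₂ (Fin.castAdd 1 i) (Fin.natAdd 3 j) = 0 := by
    subst hJ; intro i j; fin_cases i <;> fin_cases j <;> rfl
  have hJ₂₁₁ : J₂.submatrix (Fin.castAdd 1) (Fin.castAdd 1) =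
      !![-k3, β * N1 / N0, β * η * N1 / N0; p * γ, -k4, 0; q * γ, a2 * σ, -k5] := by
    subst hJ; ext i j; fin_cases i <;> fin_cases j <;> rfl
  have hJ₂₂₂ : J₂.submatrix (Fin.natAdd 3) (Fin.natAdd 3) = !![-μ] := by
    subst hJ; ext i j; fin_cases i; fin_cases j; rfl
  rw [charpoly_eq_mul_of_lower_left_eq_zero (m := 2) (n := 4) J hJ₂₁,
    charpoly_eq_mul_of_upper_right_eq_zero (m := 3) (n := 1) J₂ hJ₂₁₂, hJ₁, hJ₂₁₁, hJ₂₂₂,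
    charpoly_fin_two_eq (s₁ := k1 + k2) (s₀ := μ * (μ + c1 + c2)) (by ring)
      (by rw [hk1, hk2]; ring),
    charpoly_fin_three_eq (s₂ := w2) (s₁ := w1) (s₀ := w0) (by rw [hw2]; ring)
      (by rw [hw1, eq_div_iff hD.ne']; linear_combination (p + η * q) * hRcD)
      (by rw [hw0]; linear_combination hRcD),
    charpoly_fin_one_eq (neg_neg μ)]
  ring

/-- Factorization of the characteristic polynomial of the Jacobian of the COVID-19
model at the disease-free equilibrium:
`det(ν I₆ - J(E0)) = (ν + μ)(ν² + (k1+k2)ν + μ(μ+c1+c2)) g(ν)`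
with `g` the monic cubic with coefficients `ϖ2, ϖ1, ϖ0`. -/
theorem charpoly_factorization_at_dfe
    (Λ μ β η γ σ θ δ c1 c2 r1 r2 p q a1 a2 φ1 φ2 : ℝ)
    (hΛ : 0 < Λ) (hμ : 0 < μ) (hβ : 0 < β) (hη : 0 < η) (hγ : 0 < γ)
    (hσ : 0 < σ) (hθ : 0 < θ) (hδ : 0 < δ) (hc1 : 0 < c1) (hc2 : 0 < c2)
    (hr1 : 0 < r1) (hr1' : r1 < 1) (hr2 : 0 < r2) (hr2' : r2 < 1)
    (hp : 0 < p) (hp' : p < 1) (hq : 0 < q) (hq' : q < 1)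
    (ha1 : 0 < a1) (ha1' : a1 < 1) (ha2 : 0 < a2) (ha2' : a2 < 1)
    (hr12 : r1 + r2 = 1) (hpq : p + q = 1) (ha12 : a1 + a2 = 1)
    (hφ1 : 0 ≤ φ1) (hφ1' : φ1 ≤ 1) (hφ2 : 0 ≤ φ2) (hφ2' : φ2 ≤ 1)
    (k1 k2 k3 k4 k5 k6 S0 V0 N0 N1 Rc : ℝ)
    (hk1 : k1 = c1 + μ) (hk2 : k2 = c2 + μ) (hk3 : k3 = μ + γ)
    (hk4 : k4 = μ + σ) (hk5 : k5 = μ + δ + θ) (hk6 : k6 = k1 * k2 - c1 * c2)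
    (hS0 : S0 = (c2 * r2 + r1 * k2) * Λ / k6)
    (hV0 : V0 = (k1 * r2 + c1 * r1) * Λ / k6)
    (hN0 : N0 = S0 + V0) (hN1 : N1 = S0 + φ1 * V0)
    (hRc : Rc = N1 * β * η * γ * (a2 * p * σ + k4 * q) / (N0 * k3 * k4 * k5)
        + N1 * β * p * γ / (N0 * k3 * k4))
    (J : Matrix (Fin 6) (Fin 6) ℝ)
    (hJ : J = !![-k1, c2, 0, -(β * S0 / N0), -(β * η * S0 / N0), 0;
                 c1, -k2, 0, -(β * φ1 * V0 / N0), -(β * η * φ1 * V0 / N0), 0;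
                 0, 0, -k3, β * N1 / N0, β * η * N1 / N0, 0;
                 0, 0, p * γ, -k4, 0, 0;
                 0, 0, q * γ, a2 * σ, -k5, 0;
                 0, 0, 0, a1 * σ, θ, -μ])
    (w2 w1 w0 : ℝ)
    (hw2 : w2 = k3 + k4 + k5)
    (hw1 : w1 = ((1 - Rc) * (p + η * q) * k3 * k4 * k5
        + (k4 + k3) * (k5 + a2 * η * σ) * k5 * p
        + ((k5 + k3) * k4 * q + k3 * a2 * p * σ) * k4 * η)
        / (a2 * η * p * σ + k4 * η * q + k5 * p))
    (hw0 : w0 = (1 - Rc) * k3 * k4 * k5) :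
    J.charpoly =
      (X + C μ) * (X ^ 2 + C (k1 + k2) * X + C (μ * (μ + c1 + c2))) *
        (X ^ 3 + C w2 * X ^ 2 + C w1 * X + C w0) :=
  charpoly_factorization_at_dfe_general μ β η γ σ θ δ c1 c2 p q a1 a2 φ1 hμ hη hγ hσ hθ hδ hp hq ha2
    k1 k2 k3 k4 k5 S0 V0 N0 N1 Rc hk1 hk2 hk3 hk4 hk5 hRc J hJ w2 w1 w0 hw2 hw1 hw0
end

section
/- Local asymptotic stability of the DFE (ODE model): if R_c < 1, then every complex eigenvalue of the 6×6 Jacobian matrix J(E0) has strictly negative real part. -/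
/-!
`J(E0)` is block triangular, with diagonal blocks `!![-k1, c2; c1, -k2]`, the `3 × 3` block on
rows and columns `2, 3, 4`, and `-μ`. So an eigenvalue `λ` is `-μ`, or solves
`(λ + k1)(λ + k2) = c1 c2`, or solves `(λ + k3)(λ + k4)(λ + k5) = x(λ + k5) + y(λ + k4) + w`
with `x, y, w ≥ 0` and `k5 x + k4 y + w = R_c k3 k4 k5`. If `Re λ ≥ 0` then `‖λ + k‖ ≥ k` for
every real `k`, and taking norms in these equations gives `c1 c2 ≥ k1 k2`, resp. `R_c ≥ 1`.
-/

open Matrix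

theorem Matrix.det_fin_six_of_blockTriangular {R : Type*} [CommRing R]
    (A : Matrix (Fin 6) (Fin 6) R) (hA : A.BlockTriangular (![1, 1, 2, 2, 2, 0] : Fin 6 → ℕ)) :
    A.det = A 5 5 * !![A 0 0, A 0 1; A 1 0, A 1 1].det
      * !![A 2 2, A 2 3, A 2 4; A 3 2, A 3 3, A 3 4; A 4 2, A 4 3, A 4 4].det := by
  have hzero : ∀ i j, (![1, 1, 2, 2, 2, 0] : Fin 6 → ℕ) j < ![1, 1, 2, 2, 2, 0] i → A i j = 0 :=
    fun _ _ h => hA h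
  conv_lhs =>
    rw [← etaExpand_eq A]
    simp (disch := decide) only [etaExpand, FinVec.etaExpand, FinVec.map, FinVec.seq, vecTail,
      id, Function.comp_apply, Fin.reduceSucc, hzero]
  eval_det
  ring

namespace Complex

theorem le_norm_add_ofReal {z : ℂ} (hz : 0 ≤ z.re) (k : ℝ) : k ≤ ‖z + k‖ :=
  calc k ≤ (z + k).re := by simpa using hz
    _ ≤ ‖z + k‖ := re_le_norm _

theorem re_neg_of_add_mul_add_eq {z c : ℂ} {k₁ k₂ : ℝ} (hk₂ : 0 ≤ k₂) (hc : ‖c‖ < k₁ * k₂)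
    (h : (z + k₁) * (z + k₂) = c) : z.re < 0 := by
  by_contra! hz
  have hnorm : ‖z + k₁‖ * ‖z + k₂‖ = ‖c‖ := by rw [← norm_mul, h]
  have := mul_le_mul (le_norm_add_ofReal hz k₁) (le_norm_add_ofReal hz k₂) hk₂ (norm_nonneg _)
  linarith

theorem re_neg_of_add_mul_add_mul_add_eq {z : ℂ} {k₃ k₄ k₅ x y w : ℝ}
    (hk₃ : 0 < k₃) (hk₄ : 0 < k₄) (hk₅ : 0 < k₅) (hx : 0 ≤ x) (hy : 0 ≤ y) (hw : 0 ≤ w)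
    (hlt : w + k₄ * y + k₅ * x < k₃ * k₄ * k₅)
    (h : (z + k₃) * (z + k₄) * (z + k₅) = x * (z + k₅) + y * (z + k₄) + w) : z.re < 0 := by
  by_contra! hz
  set a := ‖z + k₃‖
  set b := ‖z + k₄‖
  set c := ‖z + k₅‖
  have ha : k₃ ≤ a := le_norm_add_ofReal hz k₃
  have hb : k₄ ≤ b := le_norm_add_ofReal hz k₄
  have hc : k₅ ≤ c := le_norm_add_ofReal hz k₅
  have hle : a * b * c ≤ x * c + y * b + w := by
    have := congrArg norm h
    simp only [norm_mul] at this
    rw [this]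
    calc _ ≤ ‖(x : ℂ) * (z + k₅)‖ + ‖(y : ℂ) * (z + k₄)‖ + ‖(w : ℂ)‖ := norm_add₃_le
      _ = x * c + y * b + w := by
        simp only [norm_mul, norm_real, Real.norm_of_nonneg hx, Real.norm_of_nonneg hy,
          Real.norm_of_nonneg hw, b, c]
  have hab : k₃ * k₄ ≤ a * b := mul_le_mul ha hb hk₄.le (hk₃.le.trans ha)
  have hac : k₃ * k₅ ≤ a * c := mul_le_mul ha hc hk₅.le (hk₃.le.trans ha)
  have habc : 0 < a * b * c := by
    have := hk₃.trans_le ha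
    have := hk₄.trans_le hb
    have := hk₅.trans_le hc
    positivity
  have hscaled : k₃ * k₄ * k₅ * (x * c + y * b + w) ≤ a * b * c * (w + k₄ * y + k₅ * x) := by
    have hx' := mul_le_mul_of_nonneg_right hab (mul_nonneg hx (mul_nonneg hk₅.le (hk₅.le.trans hc)))
    have hy' := mul_le_mul_of_nonneg_right hac (mul_nonneg hy (mul_nonneg hk₄.le (hk₄.le.trans hb)))
    have hw' := mul_le_mul_of_nonneg_right (mul_le_mul hab hc hk₅.le (by positivity)) hw
    linarith
  have := mul_le_mul_of_nonneg_left hle (by positivity : (0 : ℝ) ≤ k₃ * k₄ * k₅)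
  linarith [mul_lt_mul_of_pos_left hlt habc]

end Complex

theorem eigenvalue_equations_of_mem_spectrum
    {k1 k2 k3 k4 k5 μ c1 c2 e1 e2 e3 e4 X Y P Q A u v : ℝ} {J : Matrix (Fin 6) (Fin 6) ℝ}
    (hJ : J = !![-k1, c2, 0, e1, e2, 0;
                 c1, -k2, 0, e3, e4, 0;
                 0, 0, -k3, X, Y, 0;
                 0, 0, P, -k4, 0, 0;
                 0, 0, Q, A, -k5, 0;
                 0, 0, 0, u, v, -μ])
    {z : ℂ} (hz : z ∈ spectrum ℂ (J.map Complex.ofReal)) :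
    z + μ = 0 ∨ (z + k1) * (z + k2) = ↑(c1 * c2) ∨
      (z + k3) * (z + k4) * (z + k5)
        = ↑(X * P) * (z + k5) + ↑(Y * Q) * (z + k4) + ↑(Y * P * A) := by
  have hJ_block : J.BlockTriangular (![1, 1, 2, 2, 2, 0] : Fin 6 → ℕ) := by
    intro i j hij
    fin_cases i <;> fin_cases j <;> simp [hJ] at hij ⊢
  have hchar_block : (scalar (Fin 6) z - J.map Complex.ofReal).BlockTriangular
      (![1, 1, 2, 2, 2, 0] : Fin 6 → ℕ) :=
    (blockTriangular_diagonal _).sub (hJ_block.map Complex.ofRealHom)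
  have hchar : (scalar (Fin 6) z - J.map Complex.ofReal).det = (z + μ)
      * ((z + k1) * (z + k2) - ↑(c1 * c2))
      * ((z + k3) * (z + k4) * (z + k5)
        - (↑(X * P) * (z + k5) + ↑(Y * Q) * (z + k4) + ↑(Y * P * A))) := by
    rw [det_fin_six_of_blockTriangular _ hchar_block]
    simp [hJ, det_fin_two_of, det_fin_three]
    ring
  have hroot := Matrix.mem_spectrum_iff_isRoot_charpoly.mp hz
  rwa [Polynomial.IsRoot, eval_charpoly, hchar, mul_eq_zero, mul_eq_zero, sub_eq_zero, sub_eq_zero,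
    or_assoc] at hroot

theorem dfe_locally_asymptotically_stable_general
    (Λ μ β η γ σ θ δ c1 c2 r1 r2 p q a1 a2 φ1 : ℝ)
    (hΛ : 0 < Λ) (hμ : 0 < μ) (hβ : 0 < β) (hη : 0 < η) (hγ : 0 < γ)
    (hσ : 0 < σ) (hθ : 0 < θ) (hδ : 0 < δ) (hc1 : 0 < c1) (hc2 : 0 < c2)
    (hr1 : 0 < r1) (hr2 : 0 < r2)
    (hp : 0 < p) (hq : 0 < q)
    (ha2 : 0 < a2)
    (hφ1 : 0 ≤ φ1)
    (k1 k2 k3 k4 k5 k6 S0 V0 N0 N1 Rc : ℝ)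
    (hk1 : k1 = c1 + μ) (hk2 : k2 = c2 + μ) (hk3 : k3 = μ + γ)
    (hk4 : k4 = μ + σ) (hk5 : k5 = μ + δ + θ) (hk6 : k6 = k1 * k2 - c1 * c2)
    (hS0 : S0 = (c2 * r2 + r1 * k2) * Λ / k6)
    (hV0 : V0 = (k1 * r2 + c1 * r1) * Λ / k6)
    (hN0 : N0 = S0 + V0) (hN1 : N1 = S0 + φ1 * V0)
    (hRc : Rc = N1 * β * η * γ * (a2 * p * σ + k4 * q) / (N0 * k3 * k4 * k5)
        + N1 * β * p * γ / (N0 * k3 * k4))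
    (J : Matrix (Fin 6) (Fin 6) ℝ)
    (hJ : J = !![-k1, c2, 0, -(β * S0 / N0), -(β * η * S0 / N0), 0;
                 c1, -k2, 0, -(β * φ1 * V0 / N0), -(β * η * φ1 * V0 / N0), 0;
                 0, 0, -k3, β * N1 / N0, β * η * N1 / N0, 0;
                 0, 0, p * γ, -k4, 0, 0;
                 0, 0, q * γ, a2 * σ, -k5, 0;
                 0, 0, 0, a1 * σ, θ, -μ])
    (hRclt : Rc < 1) :
    ∀ z ∈ spectrum ℂ (J.map (Complex.ofReal)), z.re < 0 := by
  have hk6_pos : 0 < k6 := by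
    rw [show k6 = μ * (c1 + c2 + μ) by rw [hk6, hk1, hk2]; ring]
    positivity
  have hN0_pos : 0 < N0 := by rw [hN0, hS0, hV0, hk1, hk2]; positivity
  have hN1_nonneg : 0 ≤ N1 := by rw [hN1, hS0, hV0, hk1, hk2]; positivity
  have hk3_pos : 0 < k3 := by rw [hk3]; positivity
  have hk4_pos : 0 < k4 := by rw [hk4]; positivity
  have hk5_pos : 0 < k5 := by rw [hk5]; positivity
  set x := β * N1 / N0 * (p * γ) with hx
  set y := β * η * N1 / N0 * (q * γ) with hy
  set w := β * η * N1 / N0 * (p * γ) * (a2 * σ) with hw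
  have hthreshold : w + k4 * y + k5 * x < k3 * k4 * k5 := by
    have hRc_eq : Rc * (k3 * k4 * k5) = w + k4 * y + k5 * x := by
      rw [hRc, hx, hy, hw]
      field_simp
    calc _ = Rc * (k3 * k4 * k5) := hRc_eq.symm
      _ < 1 * (k3 * k4 * k5) := mul_lt_mul_of_pos_right hRclt (by positivity)
      _ = k3 * k4 * k5 := one_mul _
  rintro z hz
  rcases eigenvalue_equations_of_mem_spectrum hJ hz with hscalar | hquadratic | hcubic
  · simpa [eq_neg_of_add_eq_zero_left hscalar] using hμ
  · have hc : ‖((c1 * c2 : ℝ) : ℂ)‖ < k1 * k2 := by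
      rw [hk1, hk2, Complex.norm_real, Real.norm_of_nonneg (by positivity)]
      nlinarith [mul_pos hμ hc1, mul_pos hμ hc2]
    exact Complex.re_neg_of_add_mul_add_eq (by rw [hk2]; positivity) hc hquadratic
  · exact Complex.re_neg_of_add_mul_add_mul_add_eq hk3_pos hk4_pos hk5_pos (by positivity)
      (by positivity) (by positivity) hthreshold hcubic

/-- Local asymptotic stability of the DFE of the COVID-19 ODE model: if `R_c < 1`,
then every complex eigenvalue of the Jacobian `J(E0)` has strictly negative real
part. -/
theorem dfe_locally_asymptotically_stable
    (Λ μ β η γ σ θ δ c1 c2 r1 r2 p q a1 a2 φ1 φ2 : ℝ)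
    (hΛ : 0 < Λ) (hμ : 0 < μ) (hβ : 0 < β) (hη : 0 < η) (hγ : 0 < γ)
    (hσ : 0 < σ) (hθ : 0 < θ) (hδ : 0 < δ) (hc1 : 0 < c1) (hc2 : 0 < c2)
    (hr1 : 0 < r1) (hr1' : r1 < 1) (hr2 : 0 < r2) (hr2' : r2 < 1)
    (hp : 0 < p) (hp' : p < 1) (hq : 0 < q) (hq' : q < 1)
    (ha1 : 0 < a1) (ha1' : a1 < 1) (ha2 : 0 < a2) (ha2' : a2 < 1)
    (hr12 : r1 + r2 = 1) (hpq : p + q = 1) (ha12 : a1 + a2 = 1)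
    (hφ1 : 0 ≤ φ1) (hφ1' : φ1 ≤ 1) (hφ2 : 0 ≤ φ2) (hφ2' : φ2 ≤ 1)
    (k1 k2 k3 k4 k5 k6 S0 V0 N0 N1 Rc : ℝ)
    (hk1 : k1 = c1 + μ) (hk2 : k2 = c2 + μ) (hk3 : k3 = μ + γ)
    (hk4 : k4 = μ + σ) (hk5 : k5 = μ + δ + θ) (hk6 : k6 = k1 * k2 - c1 * c2)
    (hS0 : S0 = (c2 * r2 + r1 * k2) * Λ / k6)
    (hV0 : V0 = (k1 * r2 + c1 * r1) * Λ / k6)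
    (hN0 : N0 = S0 + V0) (hN1 : N1 = S0 + φ1 * V0)
    (hRc : Rc = N1 * β * η * γ * (a2 * p * σ + k4 * q) / (N0 * k3 * k4 * k5)
        + N1 * β * p * γ / (N0 * k3 * k4))
    (J : Matrix (Fin 6) (Fin 6) ℝ)
    (hJ : J = !![-k1, c2, 0, -(β * S0 / N0), -(β * η * S0 / N0), 0;
                 c1, -k2, 0, -(β * φ1 * V0 / N0), -(β * η * φ1 * V0 / N0), 0;
                 0, 0, -k3, β * N1 / N0, β * η * N1 / N0, 0;
                 0, 0, p * γ, -k4, 0, 0;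
                 0, 0, q * γ, a2 * σ, -k5, 0;
                 0, 0, 0, a1 * σ, θ, -μ])
    (hRclt : Rc < 1) :
    ∀ z ∈ spectrum ℂ (J.map (Complex.ofReal)), z.re < 0 :=
  dfe_locally_asymptotically_stable_general Λ μ β η γ σ θ δ c1 c2 r1 r2 p q a1 a2 φ1 hΛ hμ hβ hη hγ
    hσ hθ hδ hc1 hc2 hr1 hr2 hp hq ha2 hφ1 k1 k2 k3 k4 k5 k6 S0 V0 N0 N1 Rc hk1 hk2 hk3 hk4 hk5 hk6
    hS0 hV0 hN0 hN1 hRc J hJ hRclt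
end

section
/- Local asymptotic stability of the DFE for the linearized reaction-diffusion model: let κs, κv, κe, κa, κi, κr be positive reals and Υ = diag(κs, κv, κe, κa, κi, κr). If R_c < 1, then for every ψ ≥ 0, every complex eigenvalue of the 6×6 matrix J(E0) − ψ·Υ has strictly negative real part. -/
/-!
The characteristic matrix of `J(E0) - ψΥ` is block triangular, so its determinant is the product
of the recovered factor `z + μ + ψκr`, a quadratic from the `(S, V)` block and a cubic from the
`(E, A, I)` block. The quadratic has positive coefficients. The cubic is
`(z + K₃)(z + K₄)(z + K₅) - a(z + K₅) - b(z + K₄) - c` with removal rates `Kᵢ = kᵢ + ψκᵢ`, and its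
Routh–Hurwitz conditions follow from `a/(K₃K₄) + b/(K₃K₅) + c/(K₃K₄K₅) < 1`. This reproduction
number decreases in the `Kᵢ`, so diffusion only lowers it below `R_c < 1`.
-/

open Matrix

theorem Complex.re_neg_of_quadratic_eq_zero {T D : ℝ} (hT : 0 < T) (hD : 0 < D) {z : ℂ}
    (h : z ^ 2 + T * z + D = 0) : z.re < 0 := by
  by_contra! hx
  have hre := congrArg Complex.re h
  have him := congrArg Complex.im h
  simp only [add_re, add_im, mul_re, mul_im, pow_two, ofReal_re, ofReal_im, zero_re,
    zero_im] at hre him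
  rcases eq_or_ne z.im 0 with hy | hy
  · rw [hy] at hre; nlinarith
  · have hsum : 2 * z.re + T = 0 := by
      refine (mul_eq_zero.mp (?_ : z.im * (2 * z.re + T) = 0)).resolve_left hy
      linear_combination him
    nlinarith

theorem Complex.re_neg_of_cubic_eq_zero {A B C : ℝ} (hA : 0 < A) (hB : 0 < B) (hC : 0 < C)
    (hABC : C < A * B) {z : ℂ} (h : z ^ 3 + A * z ^ 2 + B * z + C = 0) : z.re < 0 := by
  by_contra! hx
  have hre := congrArg Complex.re h
  have him := congrArg Complex.im h
  simp only [add_re, add_im, mul_re, mul_im, pow_succ, pow_zero, one_mul, ofReal_re, ofReal_im,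
    zero_re, zero_im] at hre him
  rcases eq_or_ne z.im 0 with hy | hy
  · rw [hy] at hre; nlinarith
  · have him' : 3 * z.re ^ 2 - z.im ^ 2 + 2 * A * z.re + B = 0 := by
      refine (mul_eq_zero.mp (?_ : z.im * (3 * z.re ^ 2 - z.im ^ 2 + 2 * A * z.re + B) = 0)
        ).resolve_left hy
      linear_combination him
    -- eliminating `z.im ^ 2` leaves a cubic in `z.re` all of whose coefficients are negative
    have hre' : -8 * z.re ^ 3 - 8 * A * z.re ^ 2 - 2 * (A ^ 2 + B) * z.re + (C - A * B) = 0 := by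
      linear_combination hre - (3 * z.re + A) * him'
    nlinarith [pow_nonneg hx 3, sq_nonneg z.re]

theorem Complex.re_neg_of_mul_sub_eq_zero {K₁ K₂ m : ℝ} (hK₁ : 0 < K₁) (hK₂ : 0 < K₂)
    (hm : m < K₁ * K₂) {z : ℂ} (h : (z + K₁) * (z + K₂) - m = 0) : z.re < 0 :=
  re_neg_of_quadratic_eq_zero (D := K₁ * K₂ - m) (add_pos hK₁ hK₂) (sub_pos.mpr hm) <| by
    push_cast; linear_combination h

/-- `a / (K₃ K₄)`, `b / (K₃ K₅)` and `c / (K₃ K₄ K₅)` are the contributions of the transmission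
routes through `A`, through `I`, and through `A → I`, when `E`, `A`, `I` are left at rates
`K₃`, `K₄`, `K₅`; at `(k₃, k₄, k₅)` this is `R_c`. -/
noncomputable def infectedReproductionNumber (a b c K₃ K₄ K₅ : ℝ) : ℝ :=
  a / (K₃ * K₄) + b / (K₃ * K₅) + c / (K₃ * K₄ * K₅)

theorem infectedReproductionNumber_anti {a b c k₃ k₄ k₅ K₃ K₄ K₅ : ℝ}
    (ha : 0 ≤ a) (hb : 0 ≤ b) (hc : 0 ≤ c) (hk₃ : 0 < k₃) (hk₄ : 0 < k₄) (hk₅ : 0 < k₅)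
    (h₃ : k₃ ≤ K₃) (h₄ : k₄ ≤ K₄) (h₅ : k₅ ≤ K₅) :
    infectedReproductionNumber a b c K₃ K₄ K₅ ≤ infectedReproductionNumber a b c k₃ k₄ k₅ := by
  have := hk₃.trans_le h₃
  have := hk₄.trans_le h₄
  have := hk₅.trans_le h₅
  unfold infectedReproductionNumber
  gcongr

theorem Complex.re_neg_of_infectedFactor_eq_zero {a b c K₃ K₄ K₅ : ℝ}
    (ha : 0 ≤ a) (hb : 0 ≤ b) (hc : 0 ≤ c) (hK₃ : 0 < K₃) (hK₄ : 0 < K₄) (hK₅ : 0 < K₅)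
    (hR : infectedReproductionNumber a b c K₃ K₄ K₅ < 1) {z : ℂ}
    (h : (z + K₃) * (z + K₄) * (z + K₅) - a * (z + K₅) - b * (z + K₄) - c = 0) :
    z.re < 0 := by
  have hdet : a * K₅ + b * K₄ + c < K₃ * K₄ * K₅ := by
    calc a * K₅ + b * K₄ + c = infectedReproductionNumber a b c K₃ K₄ K₅ * (K₃ * K₄ * K₅) := by
          unfold infectedReproductionNumber; field_simp
      _ < 1 * (K₃ * K₄ * K₅) := by gcongr
      _ = K₃ * K₄ * K₅ := one_mul _
  have ha' : a < K₃ * K₄ := by nlinarith [mul_pos hK₃ hK₄]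
  have hb' : b < K₃ * K₅ := by nlinarith [mul_pos hK₃ hK₅]
  refine re_neg_of_cubic_eq_zero (A := K₃ + K₄ + K₅) (B := K₃ * K₄ + K₃ * K₅ + K₄ * K₅ - a - b)
    (C := K₃ * K₄ * K₅ - a * K₅ - b * K₄ - c) (by positivity) (by nlinarith [mul_pos hK₄ hK₅])
    (by linarith) ?_ (by push_cast; linear_combination h)
  nlinarith [mul_pos (mul_pos hK₃ hK₄) hK₅, mul_pos (mul_pos hK₄ hK₄) hK₅,
    mul_pos (mul_pos hK₄ hK₅) hK₅, mul_pos (sub_pos.mpr ha') (add_pos hK₃ hK₄),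
    mul_pos (sub_pos.mpr hb') (add_pos hK₃ hK₅)]

theorem det_blockTriangular_fin_six {R : Type*} [CommRing R]
    (x₁ x₂ x₃ x₄ x₅ x₆ u v w₁ w₂ w₃ w₄ g₁ g₂ h₁ h₂ s t₁ t₂ : R) :
    det !![x₁, -u, 0, w₁, w₂, 0;
           -v, x₂, 0, w₃, w₄, 0;
           0, 0, x₃, -g₁, -g₂, 0;
           0, 0, -h₁, x₄, 0, 0;
           0, 0, -h₂, -s, x₅, 0;
           0, 0, 0, t₁, t₂, x₆] =
      x₆ * (x₁ * x₂ - u * v) * (x₃ * x₄ * x₅ - g₁ * h₁ * x₅ - g₂ * h₂ * x₄ - g₂ * h₁ * s) := by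
  simp [det_succ_row_zero, Fin.sum_univ_succ, Fin.succAbove]
  ring

theorem det_scalar_sub_map_ofReal_fin_six (z : ℂ) (ψ : ℝ)
    (k₁ k₂ k₃ k₄ k₅ k₆ u v w₁ w₂ w₃ w₄ g₁ g₂ h₁ h₂ s t₁ t₂ κ₁ κ₂ κ₃ κ₄ κ₅ κ₆ : ℝ) :
    det (scalar (Fin 6) z - (!![-k₁, u, 0, -w₁, -w₂, 0;
                                v, -k₂, 0, -w₃, -w₄, 0;
                                0, 0, -k₃, g₁, g₂, 0;
                                0, 0, h₁, -k₄, 0, 0;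
                                0, 0, h₂, s, -k₅, 0;
                                0, 0, 0, t₁, t₂, -k₆] -
        ψ • diagonal ![κ₁, κ₂, κ₃, κ₄, κ₅, κ₆]).map Complex.ofReal) =
      (z + ↑(k₆ + ψ * κ₆)) * ((z + ↑(k₁ + ψ * κ₁)) * (z + ↑(k₂ + ψ * κ₂)) - ↑(u * v)) *
        ((z + ↑(k₃ + ψ * κ₃)) * (z + ↑(k₄ + ψ * κ₄)) * (z + ↑(k₅ + ψ * κ₅))
          - ↑(g₁ * h₁) * (z + ↑(k₅ + ψ * κ₅)) - ↑(g₂ * h₂) * (z + ↑(k₄ + ψ * κ₄))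
          - ↑(g₂ * h₁ * s)) := by
  trans det !![z + ↑(k₁ + ψ * κ₁), -↑u, 0, ↑w₁, ↑w₂, 0;
               -↑v, z + ↑(k₂ + ψ * κ₂), 0, ↑w₃, ↑w₄, 0;
               0, 0, z + ↑(k₃ + ψ * κ₃), -↑g₁, -↑g₂, 0;
               0, 0, -↑h₁, z + ↑(k₄ + ψ * κ₄), 0, 0;
               0, 0, -↑h₂, -↑s, z + ↑(k₅ + ψ * κ₅), 0;
               0, 0, 0, -↑t₁, -↑t₂, z + ↑(k₆ + ψ * κ₆)]
  · congr 1
    ext i j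
    fin_cases i <;> fin_cases j <;> simp <;> ring
  · rw [det_blockTriangular_fin_six]
    push_cast
    ring

theorem dfe_locally_asymptotically_stable_pde_general
    (Λ μ β η γ σ θ δ c1 c2 r1 r2 p q a1 a2 φ1 : ℝ)
    (hΛ : 0 < Λ) (hμ : 0 < μ) (hβ : 0 < β) (hη : 0 < η) (hγ : 0 < γ)
    (hσ : 0 < σ) (hθ : 0 < θ) (hδ : 0 < δ) (hc1 : 0 < c1) (hc2 : 0 < c2)
    (hr1 : 0 < r1) (hr2 : 0 < r2) (hp : 0 < p) (hq : 0 < q) (ha2 : 0 < a2) (hφ1 : 0 ≤ φ1)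
    (k1 k2 k3 k4 k5 k6 S0 V0 N0 N1 Rc : ℝ)
    (hk1 : k1 = c1 + μ) (hk2 : k2 = c2 + μ) (hk3 : k3 = μ + γ)
    (hk4 : k4 = μ + σ) (hk5 : k5 = μ + δ + θ) (hk6 : k6 = k1 * k2 - c1 * c2)
    (hS0 : S0 = (c2 * r2 + r1 * k2) * Λ / k6)
    (hV0 : V0 = (k1 * r2 + c1 * r1) * Λ / k6)
    (hN0 : N0 = S0 + V0) (hN1 : N1 = S0 + φ1 * V0)
    (hRc : Rc = N1 * β * η * γ * (a2 * p * σ + k4 * q) / (N0 * k3 * k4 * k5)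
        + N1 * β * p * γ / (N0 * k3 * k4))
    (J : Matrix (Fin 6) (Fin 6) ℝ)
    (hJ : J = !![-k1, c2, 0, -(β * S0 / N0), -(β * η * S0 / N0), 0;
                 c1, -k2, 0, -(β * φ1 * V0 / N0), -(β * η * φ1 * V0 / N0), 0;
               0, 0, -k3, β * N1 / N0, β * η * N1 / N0, 0;
               0, 0, p * γ, -k4, 0, 0;
               0, 0, q * γ, a2 * σ, -k5, 0;
               0, 0, 0, a1 * σ, θ, -μ])
    (κs κv κe κa κi κr : ℝ)
    (hκs : 0 < κs) (hκv : 0 < κv) (hκe : 0 < κe)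
    (hκa : 0 < κa) (hκi : 0 < κi) (hκr : 0 < κr)
    (Υ : Matrix (Fin 6) (Fin 6) ℝ)
    (hΥ : Υ = Matrix.diagonal ![κs, κv, κe, κa, κi, κr])
    (hRclt : Rc < 1) :
    ∀ ψ : ℝ, 0 ≤ ψ →
      ∀ z ∈ spectrum ℂ ((J - ψ • Υ).map (Complex.ofReal)), z.re < 0 := by
  have hk1' : 0 < k1 := hk1 ▸ by positivity
  have hk2' : 0 < k2 := hk2 ▸ by positivity
  have hk3' : 0 < k3 := hk3 ▸ by positivity
  have hk4' : 0 < k4 := hk4 ▸ by positivity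
  have hk5' : 0 < k5 := hk5 ▸ by positivity
  have hk6' : 0 < k6 := by rw [hk6, hk1, hk2]; ring_nf; positivity
  have hN0' : 0 ≤ N0 := by rw [hN0, hS0, hV0, hk1, hk2]; positivity
  have hN1' : 0 ≤ N1 := by rw [hN1, hS0, hV0, hk1, hk2]; positivity
  rw [show Rc = infectedReproductionNumber (β * N1 / N0 * (p * γ)) (β * η * N1 / N0 * (q * γ))
      (β * η * N1 / N0 * (p * γ) * (a2 * σ)) k3 k4 k5 by
    rw [hRc, infectedReproductionNumber]; field_simp; ring] at hRclt
  intro ψ hψ z hz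
  have hdet := (Matrix.mem_spectrum_iff_isRoot_charpoly.mp hz).eq_zero
  rw [eval_charpoly, hJ, hΥ, det_scalar_sub_map_ofReal_fin_six] at hdet
  rcases mul_eq_zero.mp hdet with hrecoveredSV | hinfected
  · rcases mul_eq_zero.mp hrecoveredSV with hrecovered | hsv
    · rw [eq_neg_of_add_eq_zero_left hrecovered, Complex.neg_re, Complex.ofReal_re]
      linarith [mul_nonneg hψ hκr.le]
    · refine Complex.re_neg_of_mul_sub_eq_zero (by positivity) (by positivity) ?_ hsv
      rw [hk1, hk2]
      nlinarith [mul_nonneg hψ hκs.le, mul_nonneg hψ hκv.le]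
  · refine Complex.re_neg_of_infectedFactor_eq_zero (by positivity) (by positivity)
      (by positivity) (by positivity) (by positivity) (by positivity) ?_ hinfected
    refine (infectedReproductionNumber_anti ?_ ?_ ?_ ?_ ?_ ?_ ?_ ?_ ?_).trans_lt hRclt <;> bound

/-- Local asymptotic stability of the DFE for the linearized reaction-diffusion
COVID-19 model: if `R_c < 1`, then for every eigenvalue `ψ ≥ 0` of `-Δ` (Neumann),
every complex eigenvalue of `J(E0) - ψ Υ` has strictly negative real part, where
`Υ = diag(κs, κv, κe, κa, κi, κr)`. -/
theorem dfe_locally_asymptotically_stable_pde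
    (Λ μ β η γ σ θ δ c1 c2 r1 r2 p q a1 a2 φ1 φ2 : ℝ)
    (hΛ : 0 < Λ) (hμ : 0 < μ) (hβ : 0 < β) (hη : 0 < η) (hγ : 0 < γ)
    (hσ : 0 < σ) (hθ : 0 < θ) (hδ : 0 < δ) (hc1 : 0 < c1) (hc2 : 0 < c2)
    (hr1 : 0 < r1) (hr1' : r1 < 1) (hr2 : 0 < r2) (hr2' : r2 < 1)
    (hp : 0 < p) (hp' : p < 1) (hq : 0 < q) (hq' : q < 1)
    (ha1 : 0 < a1) (ha1' : a1 < 1) (ha2 : 0 < a2) (ha2' : a2 < 1)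
    (hr12 : r1 + r2 = 1) (hpq : p + q = 1) (ha12 : a1 + a2 = 1)
    (hφ1 : 0 ≤ φ1) (hφ1' : φ1 ≤ 1) (hφ2 : 0 ≤ φ2) (hφ2' : φ2 ≤ 1)
    (k1 k2 k3 k4 k5 k6 S0 V0 N0 N1 Rc : ℝ)
    (hk1 : k1 = c1 + μ) (hk2 : k2 = c2 + μ) (hk3 : k3 = μ + γ)
    (hk4 : k4 = μ + σ) (hk5 : k5 = μ + δ + θ) (hk6 : k6 = k1 * k2 - c1 * c2)
    (hS0 : S0 = (c2 * r2 + r1 * k2) * Λ / k6)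
    (hV0 : V0 = (k1 * r2 + c1 * r1) * Λ / k6)
    (hN0 : N0 = S0 + V0) (hN1 : N1 = S0 + φ1 * V0)
    (hRc : Rc = N1 * β * η * γ * (a2 * p * σ + k4 * q) / (N0 * k3 * k4 * k5)
        + N1 * β * p * γ / (N0 * k3 * k4))
    (J : Matrix (Fin 6) (Fin 6) ℝ)
    (hJ : J = !![-k1, c2, 0, -(β * S0 / N0), -(β * η * S0 / N0), 0;
                 c1, -k2, 0, -(β * φ1 * V0 / N0), -(β * η * φ1 * V0 / N0), 0;
                 0, 0, -k3, β * N1 / N0, β * η * N1 / N0, 0;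
                 0, 0, p * γ, -k4, 0, 0;
                 0, 0, q * γ, a2 * σ, -k5, 0;
                 0, 0, 0, a1 * σ, θ, -μ])
    (κs κv κe κa κi κr : ℝ)
    (hκs : 0 < κs) (hκv : 0 < κv) (hκe : 0 < κe)
    (hκa : 0 < κa) (hκi : 0 < κi) (hκr : 0 < κr)
    (Υ : Matrix (Fin 6) (Fin 6) ℝ)
    (hΥ : Υ = Matrix.diagonal ![κs, κv, κe, κa, κi, κr])
    (hRclt : Rc < 1) :
    ∀ ψ : ℝ, 0 ≤ ψ →
      ∀ z ∈ spectrum ℂ ((J - ψ • Υ).map (Complex.ofReal)), z.re < 0 :=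
  dfe_locally_asymptotically_stable_pde_general Λ μ β η γ σ θ δ c1 c2 r1 r2 p q a1 a2 φ1 hΛ hμ hβ hη
    hγ hσ hθ hδ hc1 hc2 hr1 hr2 hp hq ha2 hφ1 k1 k2 k3 k4 k5 k6 S0 V0 N0 N1 Rc hk1 hk2 hk3 hk4 hk5
    hk6 hS0 hV0 hN0 hN1 hRc J hJ κs κv κe κa κi κr hκs hκv hκe hκa hκi hκr Υ hΥ hRclt
end
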